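/- arXiv:1503.02263 — 10 statements merged into one kernel-verified Lean document; each statement's English description precedes it below -/
import Mathlib

section
/- Let V, V₁, V₂ be complex Hilbert spaces, (K, J) a Krein space, and T : V → K, T₁ : V₁ → K, T₂ : V₂ → K bounded injective linear operators with T T^[*] = T₁ T₁^[*] + T₂ T₂^[*]. Then there exist injective linear contractions R₁ : V₁ → V and R₂ : V₂ → V (i.e. ‖R₁‖ ≤ 1, ‖R₂‖ ≤ 1) such that T₁ = T R₁, T₂ = T R₂ and R₁ R₁† + R₂ R₂† = I on V, where R_j† denotes the Hilbert-space adjoint. -/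
/-!
Cancelling `J` turns the hypothesis into `T T† = T₁ T₁† + T₂ T₂†`, so
`‖T† y‖² = ‖T₁† y‖² + ‖T₂† y‖²` and each `Tⱼ†` is dominated by `T†`. Since `T` is injective,
`T†` has dense range, and the Douglas factorization `Tⱼ† = Cⱼ T†` with `‖Cⱼ‖ ≤ 1` yields
`Rⱼ := Cⱼ†`. Then `T (R₁ R₁† + R₂ R₂†) T† = T T†`, and injectivity of `T` together with density
of the range of `T†` forces `R₁ R₁† + R₂ R₂† = 1`.
-/

namespace ContinuousLinearMap

/-- Douglas factorization along a map with dense range. -/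
theorem exists_opNorm_le_comp_eq_of_norm_le
    {𝕜 E F G : Type*} [NontriviallyNormedField 𝕜]
    [NormedAddCommGroup E] [NormedSpace 𝕜 E] [NormedAddCommGroup F] [NormedSpace 𝕜 F]
    [NormedAddCommGroup G] [NormedSpace 𝕜 G] [CompleteSpace G]
    {A : E →L[𝕜] F} {B : E →L[𝕜] G} (hA : DenseRange A) {c : ℝ} (hc : 0 ≤ c)
    (hB : ∀ x, ‖B x‖ ≤ c * ‖A x‖) :
    ∃ C : F →L[𝕜] G, ‖C‖ ≤ c ∧ C ∘L A = B :=
  ⟨(B : E →ₗ[𝕜] G).extendOfNorm (A : E →ₗ[𝕜] F), LinearMap.opNorm_extendOfNorm_le hA hc hB,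
    ext fun x => LinearMap.extendOfNorm_eq hA ⟨c, hB⟩ x⟩

section InnerProductSpace

variable {𝕜 E E₁ E₂ F : Type*} [RCLike 𝕜]
  [NormedAddCommGroup E] [InnerProductSpace 𝕜 E] [CompleteSpace E]
  [NormedAddCommGroup E₁] [InnerProductSpace 𝕜 E₁] [CompleteSpace E₁]
  [NormedAddCommGroup E₂] [InnerProductSpace 𝕜 E₂] [CompleteSpace E₂]
  [NormedAddCommGroup F] [InnerProductSpace 𝕜 F] [CompleteSpace F]

theorem denseRange_adjoint_of_injective {T : E →L[𝕜] F} (hT : Function.Injective T) :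
    DenseRange (adjoint T) := by
  have h := T.orthogonal_ker
  rw [LinearMap.ker_eq_bot_of_injective hT, Submodule.bot_orthogonal_eq_top, eq_comm,
    ← Submodule.dense_iff_topologicalClosure_eq_top] at h
  exact h

theorem norm_adjoint_apply_sq_eq_add {T : E →L[𝕜] F} {T₁ : E₁ →L[𝕜] F} {T₂ : E₂ →L[𝕜] F}
    (h : T ∘L adjoint T = T₁ ∘L adjoint T₁ + T₂ ∘L adjoint T₂) (y : F) :
    ‖adjoint T y‖ ^ 2 = ‖adjoint T₁ y‖ ^ 2 + ‖adjoint T₂ y‖ ^ 2 := by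
  simp only [apply_norm_sq_eq_inner_adjoint_left (adjoint _), adjoint_adjoint, h, add_apply,
    inner_add_left, map_add]

theorem exists_opNorm_le_eq_comp_of_norm_adjoint_le {T : E →L[𝕜] F} {S : E₁ →L[𝕜] F}
    (hT : Function.Injective T) {c : ℝ} (hc : 0 ≤ c)
    (hS : ∀ y, ‖adjoint S y‖ ≤ c * ‖adjoint T y‖) :
    ∃ R : E₁ →L[𝕜] E, ‖R‖ ≤ c ∧ S = T ∘L R := by
  obtain ⟨C, hC, hCT⟩ := exists_opNorm_le_comp_eq_of_norm_le (A := adjoint T) (B := adjoint S)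
    (denseRange_adjoint_of_injective hT) hc hS
  refine ⟨adjoint C, by rwa [LinearIsometryEquiv.norm_map], ?_⟩
  rw [← adjoint_adjoint S, ← hCT, adjoint_comp, adjoint_adjoint]

theorem eq_one_of_comp_comp_adjoint_eq {T : E →L[𝕜] F} (hT : Function.Injective T)
    {A : E →L[𝕜] E} (h : T ∘L A ∘L adjoint T = T ∘L adjoint T) : A = 1 := by
  have hA : ∀ y, A (adjoint T y) = adjoint T y := fun y => hT (congrArg (· y) h)
  ext x
  exact congrFun ((denseRange_adjoint_of_injective hT).equalizer A.continuous continuous_id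
    (funext hA)) x

end InnerProductSpace

end ContinuousLinearMap

open ContinuousLinearMap

theorem stmt_0_general
    {K V V₁ V₂ : Type*}
    [NormedAddCommGroup K] [InnerProductSpace ℂ K] [CompleteSpace K]
    [NormedAddCommGroup V] [InnerProductSpace ℂ V] [CompleteSpace V]
    [NormedAddCommGroup V₁] [InnerProductSpace ℂ V₁] [CompleteSpace V₁]
    [NormedAddCommGroup V₂] [InnerProductSpace ℂ V₂] [CompleteSpace V₂]
    (J : K →L[ℂ] K) (hJ2 : J ∘L J = 1)
    (T : V →L[ℂ] K) (T₁ : V₁ →L[ℂ] K) (T₂ : V₂ →L[ℂ] K)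
    (hTinj : Function.Injective T) (hT₁inj : Function.Injective T₁)
    (hT₂inj : Function.Injective T₂)
    (hsum : T ∘L (adjoint T ∘L J) = T₁ ∘L (adjoint T₁ ∘L J) + T₂ ∘L (adjoint T₂ ∘L J)) :
    ∃ (R₁ : V₁ →L[ℂ] V) (R₂ : V₂ →L[ℂ] V),
      Function.Injective R₁ ∧ Function.Injective R₂ ∧
      ‖R₁‖ ≤ 1 ∧ ‖R₂‖ ≤ 1 ∧
      T₁ = T ∘L R₁ ∧ T₂ = T ∘L R₂ ∧
      R₁ ∘L adjoint R₁ + R₂ ∘L adjoint R₂ = 1 := by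
  have hsum' : T ∘L adjoint T = T₁ ∘L adjoint T₁ + T₂ ∘L adjoint T₂ := by
    simpa only [add_comp, comp_assoc, hJ2, one_def, comp_id] using congrArg (· ∘L J) hsum
  have hnorm := norm_adjoint_apply_sq_eq_add hsum'
  have hle₁ (y : K) : ‖adjoint T₁ y‖ ≤ 1 * ‖adjoint T y‖ := by
    rw [one_mul, ← sq_le_sq₀ (norm_nonneg _) (norm_nonneg _), hnorm y]
    exact le_add_of_nonneg_right (sq_nonneg _)
  have hle₂ (y : K) : ‖adjoint T₂ y‖ ≤ 1 * ‖adjoint T y‖ := by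
    rw [one_mul, ← sq_le_sq₀ (norm_nonneg _) (norm_nonneg _), hnorm y]
    exact le_add_of_nonneg_left (sq_nonneg _)
  obtain ⟨R₁, hR₁, rfl⟩ := exists_opNorm_le_eq_comp_of_norm_adjoint_le hTinj zero_le_one hle₁
  obtain ⟨R₂, hR₂, rfl⟩ := exists_opNorm_le_eq_comp_of_norm_adjoint_le hTinj zero_le_one hle₂
  refine ⟨R₁, R₂, hT₁inj.of_comp (f := T), hT₂inj.of_comp (f := T), hR₁, hR₂, rfl, rfl,
    eq_one_of_comp_comp_adjoint_eq hTinj ?_⟩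
  simpa only [adjoint_comp, comp_add, add_comp, comp_assoc] using hsum'.symm

/-- Given Hilbert spaces `V, V₁, V₂`, a Krein space `(K, J)` and bounded
injective operators `T, T₁, T₂` into `K` with `T T^[*] = T₁ T₁^[*] + T₂ T₂^[*]`
(Krein adjoint `T^[*] = T† ∘ J`), there exist injective contractions `R₁, R₂` with
`T₁ = T R₁`, `T₂ = T R₂` and `R₁ R₁† + R₂ R₂† = I`. -/
theorem stmt_0
    {K V V₁ V₂ : Type*}
    [NormedAddCommGroup K] [InnerProductSpace ℂ K] [CompleteSpace K]
    [NormedAddCommGroup V] [InnerProductSpace ℂ V] [CompleteSpace V]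
    [NormedAddCommGroup V₁] [InnerProductSpace ℂ V₁] [CompleteSpace V₁]
    [NormedAddCommGroup V₂] [InnerProductSpace ℂ V₂] [CompleteSpace V₂]
    (J : K →L[ℂ] K) (hJsa : IsSelfAdjoint J) (hJ2 : J ∘L J = 1)
    (T : V →L[ℂ] K) (T₁ : V₁ →L[ℂ] K) (T₂ : V₂ →L[ℂ] K)
    (hTinj : Function.Injective T) (hT₁inj : Function.Injective T₁)
    (hT₂inj : Function.Injective T₂)
    (hsum : T ∘L (adjoint T ∘L J) = T₁ ∘L (adjoint T₁ ∘L J) + T₂ ∘L (adjoint T₂ ∘L J)) :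
    ∃ (R₁ : V₁ →L[ℂ] V) (R₂ : V₂ →L[ℂ] V),
      Function.Injective R₁ ∧ Function.Injective R₂ ∧
      ‖R₁‖ ≤ 1 ∧ ‖R₂‖ ≤ 1 ∧
      T₁ = T ∘L R₁ ∧ T₂ = T ∘L R₂ ∧
      R₁ ∘L adjoint R₁ + R₂ ∘L adjoint R₂ = 1 :=
  stmt_0_general J hJ2 T T₁ T₂ hTinj hT₁inj hT₂inj hsum
end

section
/- Let V, V₁, V₂ be complex Hilbert spaces, (K, J) a Krein space, and T : V → K, T₁ : V₁ → K, T₂ : V₂ → K bounded injective linear operators with T T^[*] = T₁ T₁^[*] + T₂ T₂^[*]. Let R₁ : V₁ → V, R₂ : V₂ → V be bounded operators with T₁ = T R₁ and T₂ = T R₂. If T₁ T₁^[*] and T₂ T₂^[*] commute, then for j = 1,2 the operator R_j R_j† commutes with T^[*] T on V, and the operator R_j† R_j commutes with T_j^[*] T_j on V_j (R_j† denotes the Hilbert-space adjoint). -/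
open ContinuousLinearMap

private lemma aux_comm {K V : Type*}
    [NormedAddCommGroup K] [InnerProductSpace ℂ K] [CompleteSpace K]
    [NormedAddCommGroup V] [InnerProductSpace ℂ V] [CompleteSpace V]
    (J : K →L[ℂ] K) (hJa : adjoint J = J) (hJ2 : J ∘L J = 1)
    (T : V →L[ℂ] K) (hTinj : Function.Injective T)
    (P Q : V →L[ℂ] V) (hPa : adjoint P = P)
    (h1 : ∀ x : K, ((adjoint T ∘L J) : K →L[ℂ] V) x =
      P ((adjoint T ∘L J) x) + Q ((adjoint T ∘L J) x))
    (h2 : ∀ x : K, P ((adjoint T ∘L J) (T (Q ((adjoint T ∘L J) x)))) =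
      Q ((adjoint T ∘L J) (T (P ((adjoint T ∘L J) x))))) :
    P ∘L ((adjoint T ∘L J) ∘L T) = ((adjoint T ∘L J) ∘L T) ∘L P := by
  set S : K →L[ℂ] V := adjoint T ∘L J with hSdef
  -- key pointwise identity
  have hkey : ∀ x : K, P (S (T (S x))) = S (T (P (S x))) := by
    intro x
    have e1 : Q (S x) = S x - P (S x) := by
      rw [eq_sub_iff_add_eq, add_comm]; exact (h1 x).symm
    have e2 : Q (S (T (P (S x)))) = S (T (P (S x))) - P (S (T (P (S x)))) := by
      rw [eq_sub_iff_add_eq, add_comm]; exact (h1 (T (P (S x)))).symm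
    have h2x : P (S (T (Q (S x)))) = Q (S (T (P (S x)))) := h2 x
    rw [e1, e2, map_sub T, map_sub S, map_sub P] at h2x
    exact sub_left_inj.mp h2x
  have hBS : (P ∘L (S ∘L T) - (S ∘L T) ∘L P) ∘L S = 0 := by
    ext x
    simp only [comp_apply, sub_apply, zero_apply, sub_eq_zero]
    exact hkey x
  have hAa : adjoint (S ∘L T) = S ∘L T := by
    rw [hSdef, adjoint_comp, adjoint_comp, adjoint_adjoint, hJa, ← comp_assoc]
  have hSa : adjoint S = J ∘L T := by
    rw [hSdef, adjoint_comp, adjoint_adjoint, hJa]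
  have hBadj : adjoint (P ∘L (S ∘L T) - (S ∘L T) ∘L P) =
      (S ∘L T) ∘L P - P ∘L (S ∘L T) := by
    rw [map_sub, adjoint_comp, hAa, adjoint_comp, hAa, hPa]
  have hadj := congrArg adjoint hBS
  rw [adjoint_comp, hBadj, hSa] at hadj
  simp only [map_zero] at hadj
  have hTB : ∀ v : V, T (((S ∘L T) ∘L P - P ∘L (S ∘L T)) v) = 0 := by
    intro v
    have h := congrArg (fun f => f v) hadj
    simp only [comp_apply, zero_apply] at h
    have h' := congrArg J h
    rw [map_zero] at h'
    calc T (((S ∘L T) ∘L P - P ∘L (S ∘L T)) v)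
        = (J ∘L J) (T (((S ∘L T) ∘L P - P ∘L (S ∘L T)) v)) := by rw [hJ2]; rfl
      _ = 0 := h'
  ext v
  apply hTinj
  have h := hTB v
  rw [sub_apply, map_sub, sub_eq_zero] at h
  exact h.symm

set_option maxHeartbeats 1000000 in
/-- In the setting of multiple embeddings into a Krein space `(K, J)`,
if `T₁ T₁^[*]` and `T₂ T₂^[*]` commute, then `R_j R_j†` commutes with `T^[*] T` on `V`,
and `R_j† R_j` commutes with `T_j^[*] T_j` on `V_j` (`j = 1, 2`). -/
theorem stmt_1
    {K V V₁ V₂ : Type*}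
    [NormedAddCommGroup K] [InnerProductSpace ℂ K] [CompleteSpace K]
    [NormedAddCommGroup V] [InnerProductSpace ℂ V] [CompleteSpace V]
    [NormedAddCommGroup V₁] [InnerProductSpace ℂ V₁] [CompleteSpace V₁]
    [NormedAddCommGroup V₂] [InnerProductSpace ℂ V₂] [CompleteSpace V₂]
    (J : K →L[ℂ] K) (hJsa : IsSelfAdjoint J) (hJ2 : J ∘L J = 1)
    (T : V →L[ℂ] K) (T₁ : V₁ →L[ℂ] K) (T₂ : V₂ →L[ℂ] K)
    (hTinj : Function.Injective T) (hT₁inj : Function.Injective T₁)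
    (hT₂inj : Function.Injective T₂)
    (hsum : T ∘L (adjoint T ∘L J) = T₁ ∘L (adjoint T₁ ∘L J) + T₂ ∘L (adjoint T₂ ∘L J))
    (R₁ : V₁ →L[ℂ] V) (R₂ : V₂ →L[ℂ] V)
    (hR₁ : T₁ = T ∘L R₁) (hR₂ : T₂ = T ∘L R₂)
    (hcomm : (T₁ ∘L (adjoint T₁ ∘L J)) ∘L (T₂ ∘L (adjoint T₂ ∘L J)) =
      (T₂ ∘L (adjoint T₂ ∘L J)) ∘L (T₁ ∘L (adjoint T₁ ∘L J))) :
    ((R₁ ∘L adjoint R₁) ∘L ((adjoint T ∘L J) ∘L T) =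
        ((adjoint T ∘L J) ∘L T) ∘L (R₁ ∘L adjoint R₁)) ∧
    ((R₂ ∘L adjoint R₂) ∘L ((adjoint T ∘L J) ∘L T) =
        ((adjoint T ∘L J) ∘L T) ∘L (R₂ ∘L adjoint R₂)) ∧
    ((adjoint R₁ ∘L R₁) ∘L ((adjoint T₁ ∘L J) ∘L T₁) =
        ((adjoint T₁ ∘L J) ∘L T₁) ∘L (adjoint R₁ ∘L R₁)) ∧
    ((adjoint R₂ ∘L R₂) ∘L ((adjoint T₂ ∘L J) ∘L T₂) =
        ((adjoint T₂ ∘L J) ∘L T₂) ∘L (adjoint R₂ ∘L R₂)) := by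
  have hJa : adjoint J = J := by rw [← star_eq_adjoint]; exact hJsa
  have hT₁a : adjoint T₁ = adjoint R₁ ∘L adjoint T := by rw [hR₁, adjoint_comp]
  have hT₂a : adjoint T₂ = adjoint R₂ ∘L adjoint T := by rw [hR₂, adjoint_comp]
  set P₁ : V →L[ℂ] V := R₁ ∘L adjoint R₁ with hP₁def
  set P₂ : V →L[ℂ] V := R₂ ∘L adjoint R₂ with hP₂def
  have hP₁a : adjoint P₁ = P₁ := by rw [hP₁def, adjoint_comp, adjoint_adjoint]
  have hP₂a : adjoint P₂ = P₂ := by rw [hP₂def, adjoint_comp, adjoint_adjoint]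
  have h1 : ∀ x : K, ((adjoint T ∘L J) : K →L[ℂ] V) x =
      P₁ ((adjoint T ∘L J) x) + P₂ ((adjoint T ∘L J) x) := by
    intro x
    apply hTinj
    have h := congrArg (fun f => f x) hsum
    simp only [comp_apply, add_apply, hR₁, hR₂, adjoint_comp] at h
    rw [map_add]
    exact h
  have h2 : ∀ x : K, P₁ ((adjoint T ∘L J) (T (P₂ ((adjoint T ∘L J) x)))) =
      P₂ ((adjoint T ∘L J) (T (P₁ ((adjoint T ∘L J) x)))) := by
    intro x
    apply hTinj
    have h := congrArg (fun f => f x) hcomm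
    simp only [comp_apply, hR₁, hR₂, adjoint_comp] at h
    exact h
  have hc₁ := aux_comm J hJa hJ2 T hTinj P₁ P₂ hP₁a h1 h2
  have hc₂ := aux_comm J hJa hJ2 T hTinj P₂ P₁ hP₂a
      (fun x => (h1 x).trans (add_comm _ _)) (fun x => (h2 x).symm)
  refine ⟨hc₁, hc₂, ?_, ?_⟩
  · ext v
    have h := congrArg (fun f => f (R₁ v)) hc₁
    simp only [comp_apply, hP₁def] at h
    show adjoint R₁ (R₁ (adjoint T₁ (J (T₁ v)))) = adjoint T₁ (J (T₁ (adjoint R₁ (R₁ v))))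
    rw [hT₁a, hR₁]
    exact congrArg (adjoint R₁) h
  · ext v
    have h := congrArg (fun f => f (R₂ v)) hc₂
    simp only [comp_apply, hP₂def] at h
    show adjoint R₂ (R₂ (adjoint T₂ (J (T₂ v)))) = adjoint T₂ (J (T₂ (adjoint R₂ (R₂ v))))
    rw [hT₂a, hR₂]
    exact congrArg (adjoint R₂) h
end

section
/- Let V, V₁, V₂ be complex Hilbert spaces, (K, J) a Krein space, and T : V → K, T₁ : V₁ → K, T₂ : V₂ → K bounded injective linear operators with T T^[*] = T₁ T₁^[*] + T₂ T₂^[*]. Let R₁ : V₁ → V, R₂ : V₂ → V be bounded operators with T₁ = T R₁ and T₂ = T R₂. Suppose C is a bounded operator on K commuting with both T₁ T₁^[*] and T₂ T₂^[*], and suppose D (bounded on V) and D_j (bounded on V_j, j = 1,2) satisfy T D = C T and T_j D_j = C T_j. Then for j = 1,2: R_j D_j R_j† = R_j R_j† D = D R_j R_j† and D R_j = R_j D_j, where R_j† denotes the Hilbert-space adjoint. -/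
/-!
Write `T⁺ = T† J` for the Krein adjoint. Since `T D = C T`, commuting `C` past
`T T⁺ = T₁ T₁⁺ + T₂ T₂⁺` gives `T (D T⁺) = T (T⁺ C)`, so `D T⁺ = T⁺ C`. With `P = R R†` we have
`T_j T_j⁺ = T P T⁺`, and commuting `C` past it yields `T (D P) T⁺ = T (P D) T⁺`. Both outer
factors cancel: `T` is injective and `T⁺` has dense range, as `J` is invertible and `ker T = 0`.
Finally `D R = R D_j` follows by cancelling `T` in `T D R = C T R = C T_j = T_j D_j = T R D_j`.
-/

open ContinuousLinearMap

section Intertwining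

variable {𝕜 E F G : Type*} [RCLike 𝕜]
  [NormedAddCommGroup E] [NormedSpace 𝕜 E] [NormedAddCommGroup F] [NormedSpace 𝕜 F]
  [NormedAddCommGroup G] [NormedSpace 𝕜 G]

theorem comp_eq_comp_of_intertwines {T : E →L[𝕜] F} (hT : Function.Injective T)
    {C : F →L[𝕜] F} {D : E →L[𝕜] E} (hD : T ∘L D = C ∘L T) {S : F →L[𝕜] E}
    (hC : C ∘L (T ∘L S) = (T ∘L S) ∘L C) : D ∘L S = S ∘L C :=
  cancel_left hT <|
    calc T ∘L (D ∘L S) = C ∘L (T ∘L S) := by rw [← comp_assoc, hD, comp_assoc]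
      _ = T ∘L (S ∘L C) := hC

theorem comp_eq_comp_of_intertwines_factor {T : E →L[𝕜] F} (hT : Function.Injective T)
    {C : F →L[𝕜] F} {D : E →L[𝕜] E} (hD : T ∘L D = C ∘L T) {R : G →L[𝕜] E}
    {D' : G →L[𝕜] G} (hD' : (T ∘L R) ∘L D' = C ∘L (T ∘L R)) : D ∘L R = R ∘L D' :=
  cancel_left hT <|
    calc T ∘L (D ∘L R) = C ∘L (T ∘L R) := by rw [← comp_assoc, hD, comp_assoc]
      _ = T ∘L (R ∘L D') := hD'.symm

end Intertwining

section Krein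

variable {𝕜 E F G : Type*} [RCLike 𝕜]
  [NormedAddCommGroup E] [InnerProductSpace 𝕜 E] [CompleteSpace E]
  [NormedAddCommGroup F] [InnerProductSpace 𝕜 F] [CompleteSpace F]
  [NormedAddCommGroup G] [InnerProductSpace 𝕜 G] [CompleteSpace G]

theorem cancel_right_adjoint {T : E →L[𝕜] F} (hT : Function.Injective T) {A B : E →L[𝕜] G}
    (h : A ∘L adjoint T = B ∘L adjoint T) : A = B :=
  adjoint.injective <| cancel_left hT <| by
    simpa only [adjoint_comp, adjoint_adjoint] using congrArg adjoint h

theorem cancel_right_kreinAdjoint {J : F →L[𝕜] F} (hJ : J ∘L J = 1) {T : E →L[𝕜] F}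
    (hT : Function.Injective T) {A B : E →L[𝕜] G}
    (h : A ∘L (adjoint T ∘L J) = B ∘L (adjoint T ∘L J)) : A = B := by
  refine cancel_right_adjoint hT ?_
  simpa only [comp_assoc, hJ, one_def, comp_id] using congrArg (· ∘L J) h

theorem factor_intertwining {J : F →L[𝕜] F} (hJ : J ∘L J = 1) {T : E →L[𝕜] F}
    (hT : Function.Injective T) {C : F →L[𝕜] F} {D : E →L[𝕜] E} (hD : T ∘L D = C ∘L T)
    (hDT : D ∘L (adjoint T ∘L J) = (adjoint T ∘L J) ∘L C) {R : G →L[𝕜] E} {D' : G →L[𝕜] G}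
    (hD' : (T ∘L R) ∘L D' = C ∘L (T ∘L R))
    (hC : C ∘L ((T ∘L R) ∘L (adjoint (T ∘L R) ∘L J))
      = ((T ∘L R) ∘L (adjoint (T ∘L R) ∘L J)) ∘L C) :
    R ∘L D' ∘L adjoint R = (R ∘L adjoint R) ∘L D ∧
      (R ∘L adjoint R) ∘L D = D ∘L (R ∘L adjoint R) ∧
      D ∘L R = R ∘L D' := by
  have hDR : D ∘L R = R ∘L D' := comp_eq_comp_of_intertwines_factor hT hD hD'
  have hP : D ∘L (R ∘L adjoint R) = (R ∘L adjoint R) ∘L D := by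
    rw [adjoint_comp] at hC
    refine cancel_right_kreinAdjoint hJ hT (cancel_left hT ?_)
    calc T ∘L (D ∘L (R ∘L adjoint R)) ∘L (adjoint T ∘L J)
        = (T ∘L D) ∘L (R ∘L adjoint R) ∘L (adjoint T ∘L J) := rfl
      _ = C ∘L ((T ∘L R) ∘L ((adjoint R ∘L adjoint T) ∘L J)) := by rw [hD]; rfl
      _ = T ∘L (R ∘L adjoint R) ∘L ((adjoint T ∘L J) ∘L C) := by rw [hC]; rfl
      _ = T ∘L ((R ∘L adjoint R) ∘L D) ∘L (adjoint T ∘L J) := by rw [← hDT]; rfl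
  refine ⟨?_, hP.symm, hDR⟩
  rw [← hP, ← comp_assoc, ← hDR]
  rfl

end Krein

theorem stmt_2_general
    {K V V₁ V₂ : Type*}
    [NormedAddCommGroup K] [InnerProductSpace ℂ K] [CompleteSpace K]
    [NormedAddCommGroup V] [InnerProductSpace ℂ V] [CompleteSpace V]
    [NormedAddCommGroup V₁] [InnerProductSpace ℂ V₁] [CompleteSpace V₁]
    [NormedAddCommGroup V₂] [InnerProductSpace ℂ V₂] [CompleteSpace V₂]
    (J : K →L[ℂ] K) (hJ2 : J ∘L J = 1)
    (T : V →L[ℂ] K) (T₁ : V₁ →L[ℂ] K) (T₂ : V₂ →L[ℂ] K)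
    (hTinj : Function.Injective T)
    (hsum : T ∘L (adjoint T ∘L J) = T₁ ∘L (adjoint T₁ ∘L J) + T₂ ∘L (adjoint T₂ ∘L J))
    (R₁ : V₁ →L[ℂ] V) (R₂ : V₂ →L[ℂ] V)
    (hR₁ : T₁ = T ∘L R₁) (hR₂ : T₂ = T ∘L R₂)
    (C : K →L[ℂ] K)
    (hC₁ : C ∘L (T₁ ∘L (adjoint T₁ ∘L J)) = (T₁ ∘L (adjoint T₁ ∘L J)) ∘L C)
    (hC₂ : C ∘L (T₂ ∘L (adjoint T₂ ∘L J)) = (T₂ ∘L (adjoint T₂ ∘L J)) ∘L C)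
    (D : V →L[ℂ] V) (D₁ : V₁ →L[ℂ] V₁) (D₂ : V₂ →L[ℂ] V₂)
    (hD : T ∘L D = C ∘L T) (hD₁ : T₁ ∘L D₁ = C ∘L T₁) (hD₂ : T₂ ∘L D₂ = C ∘L T₂) :
    (R₁ ∘L D₁ ∘L adjoint R₁ = (R₁ ∘L adjoint R₁) ∘L D ∧
      (R₁ ∘L adjoint R₁) ∘L D = D ∘L (R₁ ∘L adjoint R₁) ∧
      D ∘L R₁ = R₁ ∘L D₁) ∧
    (R₂ ∘L D₂ ∘L adjoint R₂ = (R₂ ∘L adjoint R₂) ∘L D ∧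
      (R₂ ∘L adjoint R₂) ∘L D = D ∘L (R₂ ∘L adjoint R₂) ∧
      D ∘L R₂ = R₂ ∘L D₂) := by
  have hC : C ∘L (T ∘L (adjoint T ∘L J)) = (T ∘L (adjoint T ∘L J)) ∘L C := by
    rw [hsum, comp_add, add_comp, hC₁, hC₂]
  have hDT := comp_eq_comp_of_intertwines hTinj hD hC
  subst hR₁ hR₂
  exact ⟨factor_intertwining hJ2 hTinj hD hDT hD₁ hC₁, factor_intertwining hJ2 hTinj hD hDT hD₂ hC₂⟩

/-- In the setting of multiple embeddings into a Krein space `(K, J)`: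
if `C` commutes with `T₁ T₁^[*]` and `T₂ T₂^[*]`, and `D`, `D_j` satisfy `T D = C T`,
`T_j D_j = C T_j`, then `R_j D_j R_j† = R_j R_j† D = D R_j R_j†` and `D R_j = R_j D_j`. -/
theorem stmt_2
    {K V V₁ V₂ : Type*}
    [NormedAddCommGroup K] [InnerProductSpace ℂ K] [CompleteSpace K]
    [NormedAddCommGroup V] [InnerProductSpace ℂ V] [CompleteSpace V]
    [NormedAddCommGroup V₁] [InnerProductSpace ℂ V₁] [CompleteSpace V₁]
    [NormedAddCommGroup V₂] [InnerProductSpace ℂ V₂] [CompleteSpace V₂]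
    (J : K →L[ℂ] K) (hJsa : IsSelfAdjoint J) (hJ2 : J ∘L J = 1)
    (T : V →L[ℂ] K) (T₁ : V₁ →L[ℂ] K) (T₂ : V₂ →L[ℂ] K)
    (hTinj : Function.Injective T) (hT₁inj : Function.Injective T₁)
    (hT₂inj : Function.Injective T₂)
    (hsum : T ∘L (adjoint T ∘L J) = T₁ ∘L (adjoint T₁ ∘L J) + T₂ ∘L (adjoint T₂ ∘L J))
    (R₁ : V₁ →L[ℂ] V) (R₂ : V₂ →L[ℂ] V)
    (hR₁ : T₁ = T ∘L R₁) (hR₂ : T₂ = T ∘L R₂)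
    (C : K →L[ℂ] K)
    (hC₁ : C ∘L (T₁ ∘L (adjoint T₁ ∘L J)) = (T₁ ∘L (adjoint T₁ ∘L J)) ∘L C)
    (hC₂ : C ∘L (T₂ ∘L (adjoint T₂ ∘L J)) = (T₂ ∘L (adjoint T₂ ∘L J)) ∘L C)
    (D : V →L[ℂ] V) (D₁ : V₁ →L[ℂ] V₁) (D₂ : V₂ →L[ℂ] V₂)
    (hD : T ∘L D = C ∘L T) (hD₁ : T₁ ∘L D₁ = C ∘L T₁) (hD₂ : T₂ ∘L D₂ = C ∘L T₂) :
    (R₁ ∘L D₁ ∘L adjoint R₁ = (R₁ ∘L adjoint R₁) ∘L D ∧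
      (R₁ ∘L adjoint R₁) ∘L D = D ∘L (R₁ ∘L adjoint R₁) ∧
      D ∘L R₁ = R₁ ∘L D₁) ∧
    (R₂ ∘L D₂ ∘L adjoint R₂ = (R₂ ∘L adjoint R₂) ∘L D ∧
      (R₂ ∘L adjoint R₂) ∘L D = D ∘L (R₂ ∘L adjoint R₂) ∧
      D ∘L R₂ = R₂ ∘L D₂) :=
  stmt_2_general J hJ2 T T₁ T₂ hTinj hsum R₁ R₂ hR₁ hR₂ C hC₁ hC₂ D D₁ D₂ hD hD₁ hD₂
end

section
/- Let (K, J) be a Krein space and let A, B be commuting bounded Krein-selfadjoint operators on K (A^[*] = A, B^[*] = B, AB = BA). Let p, q be real polynomials such that [p(A)x, x] ≥ 0 and [q(B)x, x] ≥ 0 for all x ∈ K, where [y,x] = ⟨Jy,x⟩. Then there exist complex Hilbert spaces V₁, V₂, V and bounded injective linear operators T₁ : V₁ → K, T₂ : V₂ → K, T : V → K such that T₁ T₁^[*] = p(A), T₂ T₂^[*] = q(B) and T T^[*] = p(A) + q(B); moreover T₁ T₁^[*] and T₂ T₂^[*] commute. -/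
open ContinuousLinearMap

/-- A complex Hilbert space together with a bounded operator into a fixed space `K`. -/
structure HilbertInto (K : Type) [NormedAddCommGroup K] [InnerProductSpace ℂ K] where
  carrier : Type
  [grp : NormedAddCommGroup carrier]
  [ips : InnerProductSpace ℂ carrier]
  [cs : CompleteSpace carrier]
  T : carrier →L[ℂ] K

attribute [instance] HilbertInto.grp HilbertInto.ips HilbertInto.cs

/-!
Krein positivity `[p(A)x, x] ≥ 0` says that `J p(A)` is a positive operator, hence so is its
conjugate `p(A) J = J (J p(A)) J`. A positive operator is `R R†` for some `R`, and restricting `R`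
to `(ker R)ᗮ` makes it injective without changing `R R†`; this gives an injective `T` with
`T T^[*] = T T† J = p(A) J J = p(A)`. The same applies to `q(B)` and `p(A) + q(B)`, and the
factorisations commute because polynomials in commuting operators commute.
-/

open scoped InnerProduct

theorem Commute.aeval_aeval {R A : Type*} [CommSemiring R] [Semiring A] [Algebra R A] {a b : A}
    (h : Commute a b) (p q : Polynomial R) :
    Commute (Polynomial.aeval a p) (Polynomial.aeval b q) :=
  Algebra.commute_of_mem_adjoin_singleton_of_commute (Polynomial.aeval_mem_adjoin_singleton R b)
    (Algebra.commute_of_mem_adjoin_singleton_of_commute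
      (Polynomial.aeval_mem_adjoin_singleton R a) h.symm).symm

namespace ContinuousLinearMap

theorem isPositive_of_forall_inner_re_nonneg_im_eq_zero {E : Type*} [NormedAddCommGroup E]
    [InnerProductSpace ℂ E] {T : E →L[ℂ] E}
    (hT : ∀ x, 0 ≤ (inner ℂ (T x) x).re ∧ (inner ℂ (T x) x).im = 0) : T.IsPositive := by
  refine (isPositive_iff_complex T).2 fun x => ⟨?_, (hT x).1⟩
  exact Complex.ext rfl (hT x).2.symm

section

variable {𝕜 E F : Type*} [RCLike 𝕜] [NormedAddCommGroup E] [InnerProductSpace 𝕜 E]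
  [NormedAddCommGroup F] [InnerProductSpace 𝕜 F]

theorem injective_comp_subtypeL_orthogonal_ker (T : E →L[𝕜] F) :
    Function.Injective (T ∘L T.kerᗮ.subtypeL) := by
  intro v w hvw
  have hmem : (v - w : E) ∈ T.ker ⊓ T.kerᗮ := ⟨by simpa [sub_eq_zero] using hvw, (v - w).2⟩
  rw [Submodule.inf_orthogonal_eq_bot, Submodule.mem_bot] at hmem
  simpa [sub_eq_zero] using hmem

variable [CompleteSpace E]

theorem comp_starProjection_orthogonal_ker (T : E →L[𝕜] F) :
    T ∘L T.kerᗮ.starProjection = T := by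
  ext x
  have hker : T (T.ker.starProjection x) = 0 := T.ker.starProjection_apply_mem x
  simp [Submodule.starProjection_orthogonal_val, hker]

theorem comp_subtypeL_orthogonal_ker_comp_adjoint [CompleteSpace F] (T : E →L[𝕜] F) :
    (T ∘L T.kerᗮ.subtypeL) ∘L (T ∘L T.kerᗮ.subtypeL)† = T ∘L T† := by
  rw [adjoint_comp, Submodule.adjoint_subtypeL, comp_assoc, ← comp_assoc _ _ (T†)]
  change (T ∘L T.kerᗮ.starProjection) ∘L T† = T ∘L T†
  rw [comp_starProjection_orthogonal_ker]

theorem IsPositive.comp_involution_of_involution_comp {J C : E →L[𝕜] E} (hJ : IsSelfAdjoint J)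
    (hJ2 : J ∘L J = 1) (hC : (J ∘L C).IsPositive) : (C ∘L J).IsPositive := by
  have hconj := hC.conj_adjoint J
  rwa [hJ.adjoint_eq, ← comp_assoc, ← comp_assoc, hJ2, one_def, id_comp] at hconj

end

end ContinuousLinearMap

namespace HilbertInto

variable {K : Type} [NormedAddCommGroup K] [InnerProductSpace ℂ K] [CompleteSpace K]

theorem exists_injective_comp_adjoint_eq {S : K →L[ℂ] K} (hS : S.IsPositive) :
    ∃ W : HilbertInto K, Function.Injective W.T ∧ W.T ∘L W.T† = S := by
  obtain ⟨R, rfl⟩ := CStarAlgebra.nonneg_iff_eq_mul_star_self.1 ((nonneg_iff_isPositive S).2 hS)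
  exact ⟨⟨R.kerᗮ, R ∘L R.kerᗮ.subtypeL⟩, injective_comp_subtypeL_orthogonal_ker R,
    comp_subtypeL_orthogonal_ker_comp_adjoint R⟩

theorem exists_injective_comp_kreinAdjoint_eq {J C : K →L[ℂ] K} (hJ : IsSelfAdjoint J)
    (hJ2 : J ∘L J = 1) (hC : ∀ x, 0 ≤ (inner ℂ (J (C x)) x).re ∧ (inner ℂ (J (C x)) x).im = 0) :
    ∃ W : HilbertInto K, Function.Injective W.T ∧ W.T ∘L (W.T† ∘L J) = C := by
  have hCJ : (C ∘L J).IsPositive :=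
    (isPositive_of_forall_inner_re_nonneg_im_eq_zero hC).comp_involution_of_involution_comp hJ hJ2
  obtain ⟨W, hinj, hW⟩ := exists_injective_comp_adjoint_eq hCJ
  refine ⟨W, hinj, ?_⟩
  rw [← comp_assoc, hW, comp_assoc, hJ2, one_def, comp_id]

end HilbertInto

theorem stmt_3_general
    {K : Type} [NormedAddCommGroup K] [InnerProductSpace ℂ K] [CompleteSpace K]
    (J : K →L[ℂ] K) (hJsa : IsSelfAdjoint J) (hJ2 : J ∘L J = 1)
    (A B : K →L[ℂ] K)
    (hAB : A ∘L B = B ∘L A)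
    (p q : Polynomial ℝ)
    (pA qB : K →L[ℂ] K)
    (hpA : pA = Polynomial.aeval A (p.map (algebraMap ℝ ℂ)))
    (hqB : qB = Polynomial.aeval B (q.map (algebraMap ℝ ℂ)))
    (hp : ∀ x : K, 0 ≤ (inner ℂ (J (pA x)) x : ℂ).re ∧ (inner ℂ (J (pA x)) x : ℂ).im = 0)
    (hq : ∀ x : K, 0 ≤ (inner ℂ (J (qB x)) x : ℂ).re ∧ (inner ℂ (J (qB x)) x : ℂ).im = 0) :
    ∃ (W₁ W₂ W : HilbertInto K),
      Function.Injective W₁.T ∧ Function.Injective W₂.T ∧ Function.Injective W.T ∧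
      W₁.T ∘L (adjoint W₁.T ∘L J) = pA ∧
      W₂.T ∘L (adjoint W₂.T ∘L J) = qB ∧
      W.T ∘L (adjoint W.T ∘L J) = pA + qB ∧
      (W₁.T ∘L (adjoint W₁.T ∘L J)) ∘L (W₂.T ∘L (adjoint W₂.T ∘L J)) =
        (W₂.T ∘L (adjoint W₂.T ∘L J)) ∘L (W₁.T ∘L (adjoint W₁.T ∘L J)) := by
  have hpq : ∀ x : K, 0 ≤ (inner ℂ (J ((pA + qB) x)) x : ℂ).re ∧
      (inner ℂ (J ((pA + qB) x)) x : ℂ).im = 0 := fun x => by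
    simp only [add_apply, map_add, inner_add_left, Complex.add_re, Complex.add_im]
    exact ⟨add_nonneg (hp x).1 (hq x).1, by rw [(hp x).2, (hq x).2, add_zero]⟩
  obtain ⟨W₁, hinj₁, hW₁⟩ := HilbertInto.exists_injective_comp_kreinAdjoint_eq hJsa hJ2 hp
  obtain ⟨W₂, hinj₂, hW₂⟩ := HilbertInto.exists_injective_comp_kreinAdjoint_eq hJsa hJ2 hq
  obtain ⟨W, hinj, hW⟩ := HilbertInto.exists_injective_comp_kreinAdjoint_eq hJsa hJ2 hpq
  refine ⟨W₁, W₂, W, hinj₁, hinj₂, hinj, hW₁, hW₂, hW, ?_⟩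
  rw [hW₁, hW₂, hpA, hqB]
  exact Commute.aeval_aeval hAB _ _

/-- For commuting bounded Krein-selfadjoint `A, B` on a Krein space `(K, J)`
with definitizing real polynomials `p, q`, there exist Hilbert spaces `V₁, V₂, V` and bounded
injective operators `T₁, T₂, T` into `K` with `T₁ T₁^[*] = p(A)`, `T₂ T₂^[*] = q(B)`,
`T T^[*] = p(A) + q(B)`; moreover `T₁ T₁^[*]` and `T₂ T₂^[*]` commute. -/
theorem stmt_3
    {K : Type} [NormedAddCommGroup K] [InnerProductSpace ℂ K] [CompleteSpace K]
    (J : K →L[ℂ] K) (hJsa : IsSelfAdjoint J) (hJ2 : J ∘L J = 1)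
    (A B : K →L[ℂ] K)
    (hAsa : J ∘L adjoint A ∘L J = A) (hBsa : J ∘L adjoint B ∘L J = B)
    (hAB : A ∘L B = B ∘L A)
    (p q : Polynomial ℝ)
    (pA qB : K →L[ℂ] K)
    (hpA : pA = Polynomial.aeval A (p.map (algebraMap ℝ ℂ)))
    (hqB : qB = Polynomial.aeval B (q.map (algebraMap ℝ ℂ)))
    (hp : ∀ x : K, 0 ≤ (inner ℂ (J (pA x)) x : ℂ).re ∧ (inner ℂ (J (pA x)) x : ℂ).im = 0)
    (hq : ∀ x : K, 0 ≤ (inner ℂ (J (qB x)) x : ℂ).re ∧ (inner ℂ (J (qB x)) x : ℂ).im = 0) :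
    ∃ (W₁ W₂ W : HilbertInto K),
      Function.Injective W₁.T ∧ Function.Injective W₂.T ∧ Function.Injective W.T ∧
      W₁.T ∘L (adjoint W₁.T ∘L J) = pA ∧
      W₂.T ∘L (adjoint W₂.T ∘L J) = qB ∧
      W.T ∘L (adjoint W.T ∘L J) = pA + qB ∧
      (W₁.T ∘L (adjoint W₁.T ∘L J)) ∘L (W₂.T ∘L (adjoint W₂.T ∘L J)) =
        (W₂.T ∘L (adjoint W₂.T ∘L J)) ∘L (W₁.T ∘L (adjoint W₁.T ∘L J)) :=
  stmt_3_general J hJsa hJ2 A B hAB p q pA qB hpA hqB hp hq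
end

section
/- Let V be a complex Hilbert space and M a bounded normal operator on V (M M† = M† M). Set A := (M + M†)/2 and B := (M − M†)/(2i). Let p, q be real polynomials and let S₁, S₂ be bounded operators on V such that p(A) = S₁ (p(A) + q(B)) and q(B) = S₂ (p(A) + q(B)). Then {z ∈ ℂ : |p(Re z)| > ‖S₁‖ · |p(Re z) + q(Im z)|} is contained in the resolvent set of M, and {z ∈ ℂ : |q(Im z)| > ‖S₂‖ · |p(Re z) + q(Im z)|} is contained in the resolvent set of M. -/
/-!
If `z ∈ σ(M)` with `M` normal, then `z - M` is not bounded below (a normal operator that is bounded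
below has dense range, hence is invertible), so there are unit vectors `uₙ` with `(M - z) uₙ → 0`;
normality gives `(M† - z̄) uₙ → 0` as well, hence `(A - Re z) uₙ → 0` and `(B - Im z) uₙ → 0`.
Factoring `p(X) - p(a) = (X - a) r(X)` shows `p(A) uₙ - p(Re z) uₙ → 0`, and likewise for `q(B)`.
Taking norms in `p(A) uₙ = S₁ (p(A) + q(B)) uₙ` yields `|p(Re z)| ≤ ‖S₁‖ |p(Re z) + q(Im z)|`.
-/

open ContinuousLinearMap Filter Topology Polynomial ComplexConjugate

section ApproximateEigenvectors
variable {𝕜 E : Type*} [NontriviallyNormedField 𝕜] [NormedAddCommGroup E] [NormedSpace 𝕜 E]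
  {ι : Type*} {l : Filter ι} {u : ι → E}

theorem tendsto_aeval_sub_algebraMap_eval_apply {T : E →L[𝕜] E} {c : 𝕜}
    (h : Tendsto (fun i ↦ (T - algebraMap 𝕜 _ c) (u i)) l (𝓝 0)) (P : 𝕜[X]) :
    Tendsto (fun i ↦ (aeval T P - algebraMap 𝕜 _ (P.eval c)) (u i)) l (𝓝 0) := by
  obtain ⟨r, hr⟩ := X_sub_C_dvd_sub_C_eval (a := c) (p := P)
  have hfactor : aeval T P - algebraMap 𝕜 _ (P.eval c) = aeval T r * (T - algebraMap 𝕜 _ c) := by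
    rw [← aeval_C, ← map_sub, hr, mul_comm, map_mul, map_sub, aeval_X, aeval_C]
  rw [hfactor]
  exact ((aeval T r).continuous.tendsto' 0 0 (map_zero _)).comp h

theorem tendsto_norm_apply_of_tendsto_sub_algebraMap {T : E →L[𝕜] E} {c : 𝕜}
    (hu : ∀ i, ‖u i‖ = 1) (h : Tendsto (fun i ↦ (T - algebraMap 𝕜 _ c) (u i)) l (𝓝 0)) :
    Tendsto (fun i ↦ ‖T (u i)‖) l (𝓝 ‖c‖) := by
  rw [tendsto_iff_norm_sub_tendsto_zero]
  refine squeeze_zero (fun _ ↦ norm_nonneg _) (fun i ↦ ?_) (by simpa using h.norm)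
  have : ‖c‖ = ‖c • u i‖ := by rw [norm_smul, hu, mul_one]
  rw [this, Real.norm_eq_abs]
  simpa [Algebra.algebraMap_eq_smul_one] using abs_norm_sub_norm_le (T (u i)) (c • u i)

theorem norm_le_opNorm_mul_norm_of_tendsto [l.NeBot] {T R S : E →L[𝕜] E} {a b : 𝕜}
    (hTSR : T = S ∘L R) (hu : ∀ i, ‖u i‖ = 1)
    (hT : Tendsto (fun i ↦ (T - algebraMap 𝕜 _ a) (u i)) l (𝓝 0))
    (hR : Tendsto (fun i ↦ (R - algebraMap 𝕜 _ b) (u i)) l (𝓝 0)) :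
    ‖a‖ ≤ ‖S‖ * ‖b‖ :=
  le_of_tendsto_of_tendsto (tendsto_norm_apply_of_tendsto_sub_algebraMap hu hT)
    ((tendsto_norm_apply_of_tendsto_sub_algebraMap hu hR).const_mul ‖S‖)
    (Eventually.of_forall fun i ↦ by rw [hTSR]; exact S.le_opNorm (R (u i)))

end ApproximateEigenvectors

section NormalOperators
variable {𝕜 E : Type*} [RCLike 𝕜] [NormedAddCommGroup E] [InnerProductSpace 𝕜 E]

theorem exists_seq_norm_eq_one_tendsto_zero_of_not_antilipschitz {N : E →L[𝕜] E}
    (h : ∀ K, ¬ AntilipschitzWith K N) :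
    ∃ u : ℕ → E, (∀ n, ‖u n‖ = 1) ∧ Tendsto (fun n ↦ N (u n)) atTop (𝓝 0) := by
  have hunbounded : ∀ n : ℕ, ∃ x, (n + 1) * ‖N x‖ < ‖x‖ := fun n ↦ by
    by_contra! hle
    exact h (n + 1) (N.antilipschitz_of_bound fun x ↦ by exact_mod_cast hle x)
  choose x hx using hunbounded
  have hx0 : ∀ n, x n ≠ 0 := fun n hxn ↦ by simpa [hxn] using hx n
  refine ⟨fun n ↦ (‖x n‖⁻¹ : 𝕜) • x n, fun n ↦ norm_smul_inv_norm (hx0 n), ?_⟩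
  rw [tendsto_zero_iff_norm_tendsto_zero]
  refine squeeze_zero (fun _ ↦ norm_nonneg _) (fun n ↦ ?_) tendsto_one_div_add_atTop_nhds_zero_nat
  have hpos : 0 < ‖x n‖ := norm_pos_iff.mpr (hx0 n)
  rw [map_smul, norm_smul, norm_inv, RCLike.norm_ofReal, abs_norm, inv_mul_le_iff₀ hpos,
    mul_one_div, le_div_iff₀ (by positivity)]
  linarith [hx n]

variable [CompleteSpace E]

theorem IsStarNormal.isUnit_of_antilipschitz {N : E →L[𝕜] E} (hN : IsStarNormal N) {K}
    (hK : AntilipschitzWith K N) : IsUnit N := by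
  rw [isUnit_iff_bijective, bijective_iff_dense_range_and_antilipschitz,
    Submodule.topologicalClosure_eq_top_iff, hN.orthogonal_range]
  exact ⟨LinearMap.ker_eq_bot.mpr hK.injective, K, hK⟩

theorem IsStarNormal.exists_seq_approx_eigenvector {T : E →L[𝕜] E} (hT : IsStarNormal T) {z : 𝕜}
    (hz : z ∈ spectrum 𝕜 T) :
    ∃ u : ℕ → E, (∀ n, ‖u n‖ = 1) ∧ Tendsto (fun n ↦ (T - algebraMap 𝕜 _ z) (u n)) atTop (𝓝 0) ∧
      Tendsto (fun n ↦ (adjoint T - algebraMap 𝕜 _ (conj z)) (u n)) atTop (𝓝 0) := by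
  set N := T - algebraMap 𝕜 _ z
  have hadj : adjoint N = adjoint T - algebraMap 𝕜 _ (conj z) := by
    rw [← star_eq_adjoint, star_sub, ← algebraMap_star_comm, star_eq_adjoint]; rfl
  have hz_normal : IsStarNormal (algebraMap 𝕜 (E →L[𝕜] E) z) :=
    ⟨by rw [← algebraMap_star_comm]; exact Algebra.commute_algebraMap_left _ _⟩
  have hN : IsStarNormal N := Commute.isStarNormal_sub <| by
    rw [← algebraMap_star_comm]; exact Algebra.commute_algebraMap_right _ _
  have hNunit : ¬ IsUnit N := by
    rwa [spectrum.mem_iff, ← IsUnit.neg_iff, neg_sub] at hz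
  obtain ⟨u, hu, hNu⟩ := exists_seq_norm_eq_one_tendsto_zero_of_not_antilipschitz
    fun K hK ↦ hNunit (hN.isUnit_of_antilipschitz hK)
  refine ⟨u, hu, hNu, ?_⟩
  rw [← hadj, tendsto_zero_iff_norm_tendsto_zero]
  simpa [← isStarNormal_iff_norm_eq_adjoint.mp hN] using hNu.norm

end NormalOperators

section RealImaginaryParts
variable {V : Type*} [NormedAddCommGroup V] [InnerProductSpace ℂ V] [CompleteSpace V]

theorem IsStarNormal.exists_seq_approx_eigenvector_re_im {M : V →L[ℂ] V} (hM : IsStarNormal M)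
    {z : ℂ} (hz : z ∈ spectrum ℂ M) :
    ∃ u : ℕ → V, (∀ n, ‖u n‖ = 1) ∧
      Tendsto (fun n ↦ ((2 : ℂ)⁻¹ • (M + adjoint M) - algebraMap ℂ _ (z.re : ℂ)) (u n))
        atTop (𝓝 0) ∧
      Tendsto (fun n ↦ ((2 * Complex.I)⁻¹ • (M - adjoint M) - algebraMap ℂ _ (z.im : ℂ)) (u n))
        atTop (𝓝 0) := by
  obtain ⟨u, hu, hMu, hMadju⟩ := hM.exists_seq_approx_eigenvector hz
  have hre : (z.re : ℂ) = (2 : ℂ)⁻¹ * (z + conj z) := by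
    rw [Complex.add_conj]; push_cast; ring
  have him : (z.im : ℂ) = (2 * Complex.I)⁻¹ * (z - conj z) := by
    rw [Complex.sub_conj]; field_simp; push_cast; ring
  refine ⟨u, hu, ?_, ?_⟩
  · have hsplit : (2 : ℂ)⁻¹ • (M + adjoint M) - algebraMap ℂ _ (z.re : ℂ) =
        (2 : ℂ)⁻¹ • ((M - algebraMap ℂ _ z) + (adjoint M - algebraMap ℂ _ (conj z))) := by
      simp only [Algebra.algebraMap_eq_smul_one, hre]
      module
    rw [hsplit]
    simpa using (hMu.add hMadju).const_smul (2 : ℂ)⁻¹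
  · have hsplit : (2 * Complex.I)⁻¹ • (M - adjoint M) - algebraMap ℂ _ (z.im : ℂ) =
        (2 * Complex.I)⁻¹ • ((M - algebraMap ℂ _ z) - (adjoint M - algebraMap ℂ _ (conj z))) := by
      simp only [Algebra.algebraMap_eq_smul_one, him]
      module
    rw [hsplit]
    simpa using (hMu.sub hMadju).const_smul (2 * Complex.I)⁻¹

end RealImaginaryParts

/-- Let `M` be a bounded normal operator on a complex Hilbert space with real
part `A` and imaginary part `B`, let `p, q` be real polynomials and `S₁, S₂` bounded operators
with `p(A) = S₁ (p(A) + q(B))` and `q(B) = S₂ (p(A) + q(B))`. Then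
`{z : |p(Re z)| > ‖S₁‖·|p(Re z) + q(Im z)|}` and `{z : |q(Im z)| > ‖S₂‖·|p(Re z) + q(Im z)|}`
are contained in the resolvent set of `M`. -/
theorem stmt_5
    {V : Type*} [NormedAddCommGroup V] [InnerProductSpace ℂ V] [CompleteSpace V]
    (M : V →L[ℂ] V) (hM : M ∘L adjoint M = adjoint M ∘L M)
    (A B : V →L[ℂ] V)
    (hA : A = (2 : ℂ)⁻¹ • (M + adjoint M))
    (hB : B = (2 * Complex.I)⁻¹ • (M - adjoint M))
    (p q : Polynomial ℝ) (S₁ S₂ : V →L[ℂ] V)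
    (hS₁ : Polynomial.aeval A (p.map (algebraMap ℝ ℂ)) =
      S₁ ∘L (Polynomial.aeval A (p.map (algebraMap ℝ ℂ)) +
        Polynomial.aeval B (q.map (algebraMap ℝ ℂ))))
    (hS₂ : Polynomial.aeval B (q.map (algebraMap ℝ ℂ)) =
      S₂ ∘L (Polynomial.aeval A (p.map (algebraMap ℝ ℂ)) +
        Polynomial.aeval B (q.map (algebraMap ℝ ℂ)))) :
    {z : ℂ | |p.eval z.re| > ‖S₁‖ * |p.eval z.re + q.eval z.im|} ⊆ resolventSet ℂ M ∧
    {z : ℂ | |q.eval z.im| > ‖S₂‖ * |p.eval z.re + q.eval z.im|} ⊆ resolventSet ℂ M := by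
  have hspec : ∀ z ∈ spectrum ℂ M, |p.eval z.re| ≤ ‖S₁‖ * |p.eval z.re + q.eval z.im| ∧
      |q.eval z.im| ≤ ‖S₂‖ * |p.eval z.re + q.eval z.im| := by
    intro z hz
    set P := p.map (algebraMap ℝ ℂ)
    set Q := q.map (algebraMap ℝ ℂ)
    obtain ⟨u, hu, hAu, hBu⟩ := IsStarNormal.exists_seq_approx_eigenvector_re_im ⟨hM.symm⟩ hz
    have hP := tendsto_aeval_sub_algebraMap_eval_apply (hA ▸ hAu) P
    have hQ := tendsto_aeval_sub_algebraMap_eval_apply (hB ▸ hBu) Q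
    have hPQ : Tendsto (fun n ↦ (aeval A P + aeval B Q -
        algebraMap ℂ _ (P.eval (z.re : ℂ) + Q.eval (z.im : ℂ))) (u n)) atTop (𝓝 0) := by
      simpa only [map_add, add_apply, sub_apply, add_sub_add_comm, add_zero] using hP.add hQ
    have h₁ := norm_le_opNorm_mul_norm_of_tendsto hS₁ hu hP hPQ
    have h₂ := norm_le_opNorm_mul_norm_of_tendsto hS₂ hu hQ hPQ
    have hev (r : ℝ[X]) (x : ℝ) : aeval (x : ℂ) r = r.eval x :=
      aeval_algebraMap_apply_eq_algebraMap_eval x r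
    simp only [P, Q, eval_map_algebraMap, hev, ← Complex.ofReal_add, Complex.norm_real,
      Real.norm_eq_abs] at h₁ h₂
    exact ⟨h₁, h₂⟩
  constructor <;> intro z hz <;> by_contra hres
  · exact (hspec z hres).1.not_gt hz
  · exact (hspec z hres).2.not_gt hz
end

section
/- Let V be a complex Hilbert space and M a bounded normal operator on V (M M† = M† M). Set A := (M + M†)/2 and B := (M − M†)/(2i). Let p, q be real polynomials and let S₁, S₂ be bounded operators on V such that p(A) = S₁ (p(A) + q(B)) and q(B) = S₂ (p(A) + q(B)). Then every z in the spectrum σ(M) with p(Re z) + q(Im z) = 0 satisfies p(Re z) = 0 and q(Im z) = 0. -/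
/-!
By the continuous functional calculus of the normal operator `M`, `p(A) = cfc (p ∘ re) M` and
`q(B) = cfc (q ∘ im) M`, so both hypotheses have the shape `cfc g M = S * cfc f M` with
`f = p ∘ re + q ∘ im`. Such a factorisation forces `g` to vanish wherever `f` does on `σ(M)`:
the bump `e = δ / (‖f‖ + δ)` is `1` at a zero `z` of `f` and keeps `‖f e‖ ≤ δ`, so
`‖g z‖ ≤ ‖cfc (g e) M‖ = ‖S * cfc (f e) M‖ ≤ ‖S‖ δ` for every `δ > 0`.
-/

open ContinuousLinearMap ComplexStarModule Complex Polynomial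

section StarModule

variable {A : Type*} [AddCommGroup A] [Module ℂ A] [StarAddMonoid A] [StarModule ℂ A]

lemma coe_realPart_eq_inv_two_smul (a : A) : (ℜ a : A) = (2 : ℂ)⁻¹ • (a + star a) := by
  rw [realPart_apply_coe, ← Complex.coe_smul]
  norm_num

lemma coe_imaginaryPart_eq_inv_two_I_smul (a : A) :
    (ℑ a : A) = (2 * I)⁻¹ • (a - star a) := by
  rw [imaginaryPart_apply_coe, ← Complex.coe_smul, smul_smul]
  congr 1
  field_simp
  norm_num

end StarModule

lemma aeval_map_ofReal_cfc {A : Type*} [Ring A] [StarRing A] [Algebra ℂ A] [TopologicalSpace A]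
    [ContinuousFunctionalCalculus ℂ A IsStarNormal] (p : ℝ[X]) (f : ℂ → ℝ) (a : A)
    [IsStarNormal a] (hf : ContinuousOn f (spectrum ℂ a)) :
    aeval (cfc (fun z ↦ (f z : ℂ)) a) (p.map (algebraMap ℝ ℂ)) =
      cfc (fun z ↦ ((p.eval (f z) : ℝ) : ℂ)) a := by
  rw [← cfc_map_polynomial _ (fun z ↦ (f z : ℂ)) a
    (hf := continuous_ofReal.comp_continuousOn hf)]
  refine cfc_congr fun z _ ↦ ?_
  rw [eval_map_algebraMap]
  exact aeval_algebraMap_apply_eq_algebraMap_eval (f z) p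

section CStarAlgebra

variable {A : Type*} [CStarAlgebra A] {a s : A} [IsStarNormal a] {f g : ℂ → ℂ} {z : ℂ}

lemma norm_apply_le_of_cfc_eq_mul_cfc (hf : ContinuousOn f (spectrum ℂ a))
    (hg : ContinuousOn g (spectrum ℂ a)) (hgf : cfc g a = s * cfc f a)
    (hz : z ∈ spectrum ℂ a) (hfz : f z = 0) {δ : ℝ} (hδ : 0 < δ) :
    ‖g z‖ ≤ ‖s‖ * δ := by
  set e : ℂ → ℂ := fun w ↦ ((δ / (‖f w‖ + δ) : ℝ) : ℂ)
  have he : ContinuousOn e (spectrum ℂ a) :=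
    continuous_ofReal.comp_continuousOn <|
      continuousOn_const.div (hf.norm.add continuousOn_const) fun w _ ↦ by positivity
  have hez : e z = 1 := by simp [e, hfz, hδ.ne']
  have hfe : ∀ w ∈ spectrum ℂ a, ‖f w * e w‖ ≤ δ := fun w _ ↦ by
    have : 0 < ‖f w‖ + δ := by positivity
    rw [norm_mul, norm_real, Real.norm_of_nonneg (by positivity), mul_div_assoc',
      div_le_iff₀ this]
    nlinarith [norm_nonneg (f w)]
  calc ‖g z‖ = ‖g z * e z‖ := by rw [hez, mul_one]
    _ ≤ ‖cfc (fun w ↦ g w * e w) a‖ := norm_apply_le_norm_cfc (fun w ↦ g w * e w) a hz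
    _ = ‖s * cfc (fun w ↦ f w * e w) a‖ := by rw [cfc_mul .., cfc_mul .., hgf, mul_assoc]
    _ ≤ ‖s‖ * ‖cfc (fun w ↦ f w * e w) a‖ := norm_mul_le _ _
    _ ≤ ‖s‖ * δ := by gcongr; exact norm_cfc_le hδ.le hfe

lemma apply_eq_zero_of_cfc_eq_mul_cfc (hf : ContinuousOn f (spectrum ℂ a))
    (hg : ContinuousOn g (spectrum ℂ a)) (hgf : cfc g a = s * cfc f a)
    (hz : z ∈ spectrum ℂ a) (hfz : f z = 0) : g z = 0 := by
  refine norm_le_zero_iff.mp <| le_of_forall_pos_le_add fun ε hε ↦ ?_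
  have hs : 0 < ‖s‖ + 1 := by positivity
  calc ‖g z‖ ≤ ‖s‖ * (ε / (‖s‖ + 1)) :=
        norm_apply_le_of_cfc_eq_mul_cfc hf hg hgf hz hfz (by positivity)
    _ ≤ 0 + ε := by rw [zero_add, mul_div_assoc', div_le_iff₀ hs]; nlinarith

end CStarAlgebra

/-- Let `M` be a bounded normal operator on a complex Hilbert space with real
part `A` and imaginary part `B`, let `p, q` be real polynomials and `S₁, S₂` bounded operators
with `p(A) = S₁ (p(A) + q(B))` and `q(B) = S₂ (p(A) + q(B))`. Then every `z ∈ σ(M)` with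
`p(Re z) + q(Im z) = 0` satisfies `p(Re z) = 0` and `q(Im z) = 0`. -/
theorem stmt_6
    {V : Type*} [NormedAddCommGroup V] [InnerProductSpace ℂ V] [CompleteSpace V]
    (M : V →L[ℂ] V) (hM : M ∘L adjoint M = adjoint M ∘L M)
    (A B : V →L[ℂ] V)
    (hA : A = (2 : ℂ)⁻¹ • (M + adjoint M))
    (hB : B = (2 * Complex.I)⁻¹ • (M - adjoint M))
    (p q : Polynomial ℝ) (S₁ S₂ : V →L[ℂ] V)
    (hS₁ : Polynomial.aeval A (p.map (algebraMap ℝ ℂ)) =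
      S₁ ∘L (Polynomial.aeval A (p.map (algebraMap ℝ ℂ)) +
        Polynomial.aeval B (q.map (algebraMap ℝ ℂ))))
    (hS₂ : Polynomial.aeval B (q.map (algebraMap ℝ ℂ)) =
      S₂ ∘L (Polynomial.aeval A (p.map (algebraMap ℝ ℂ)) +
        Polynomial.aeval B (q.map (algebraMap ℝ ℂ)))) :
    ∀ z ∈ spectrum ℂ M, p.eval z.re + q.eval z.im = 0 →
      p.eval z.re = 0 ∧ q.eval z.im = 0 := by
  intro z hz hpq
  have : IsStarNormal M := ⟨hM.symm⟩
  set P : ℂ → ℂ := fun w ↦ ((p.eval w.re : ℝ) : ℂ)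
  set Q : ℂ → ℂ := fun w ↦ ((q.eval w.im : ℝ) : ℂ)
  have hP : Continuous P := by fun_prop
  have hQ : Continuous Q := by fun_prop
  have hPA : aeval A (p.map (algebraMap ℝ ℂ)) = cfc P M := by
    rw [hA, ← star_eq_adjoint, ← coe_realPart_eq_inv_two_smul, ← cfc_re_id M,
      aeval_map_ofReal_cfc p re M continuous_re.continuousOn]
  have hQB : aeval B (q.map (algebraMap ℝ ℂ)) = cfc Q M := by
    rw [hB, ← star_eq_adjoint, ← coe_imaginaryPart_eq_inv_two_I_smul, ← cfc_im_id M,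
      aeval_map_ofReal_cfc q im M continuous_im.continuousOn]
  have hsum : aeval A (p.map (algebraMap ℝ ℂ)) + aeval B (q.map (algebraMap ℝ ℂ)) =
      cfc (fun w ↦ P w + Q w) M := by
    rw [hPA, hQB, cfc_add M P Q hP.continuousOn hQ.continuousOn]
  have hPQ : P z + Q z = 0 := by simp only [P, Q, ← ofReal_add, hpq, ofReal_zero]
  have hPQc : ContinuousOn (fun w ↦ P w + Q w) (spectrum ℂ M) := (hP.add hQ).continuousOn
  constructor
  · exact ofReal_eq_zero.mp <| apply_eq_zero_of_cfc_eq_mul_cfc hPQc hP.continuousOn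
      (by rw [← hPA, ← hsum]; exact hS₁) hz hPQ
  · exact ofReal_eq_zero.mp <| apply_eq_zero_of_cfc_eq_mul_cfc hPQc hQ.continuousOn
      (by rw [← hQB, ← hsum]; exact hS₂) hz hPQ
end

section
/- Let a, b be nonzero one-variable polynomials over ℂ. For s ∈ ℂ[z,w], the following are equivalent: (i) for every root ζ of a, every root η of b, every k with 0 ≤ k ≤ d_a(ζ) − 1 and every l with 0 ≤ l ≤ d_b(η) − 1, the mixed partial derivative ∂^{k+l} s / ∂z^k ∂w^l vanishes at (ζ, η); (ii) there exist u, v ∈ ℂ[z,w] with s(z,w) = a(z) u(z,w) + b(w) v(z,w). -/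
/-!
Transport the problem to `ℂ[X][Y]`, where `Y` plays the role of `w` and `∂/∂z` acts on the
coefficients. By Leibniz' rule every multiple of `a(X)` and every multiple of `b(Y)` satisfies
the vanishing conditions. Conversely, dividing `p` by `b(Y)` (made monic) leaves a
remainder `r` with `deg_Y r < deg b` that still satisfies the conditions. For a root `x` of `a`
and `k < d_a(x)`, the one-variable polynomial `(∂ₓᵏ r)(x, Y)` has degree `< deg b` and vanishes
to order `d_b(y)` at every root `y` of `b`, so it is zero. Read coefficientwise, this says that
every coefficient `r_j(X)` of `r` vanishes to order `d_a(x)` at every root `x` of `a`, so `a ∣ r_j`.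
-/

theorem Derivation.map_iterate_mul_eq_zero {R A B : Type*} [CommSemiring R] [CommSemiring A]
    [Algebra R A] [Semiring B] (D : Derivation R A A) (φ : A →+* B) {c : A} {k : ℕ}
    (hc : ∀ j ≤ k, φ (D^[j] c) = 0) (t : A) : φ (D^[k] (c * t)) = 0 := by
  induction k generalizing c t with
  | zero => simpa using congrArg (· * φ t) (hc 0 le_rfl)
  | succ k ih =>
    rw [Function.iterate_succ_apply, D.leibniz, smul_eq_mul, smul_eq_mul, iterate_map_add,
      map_add, mul_comm t, ih (fun j hj => hc j (by omega)),
      ih (c := D c) (fun j hj => by rw [← Function.iterate_succ_apply]; exact hc _ (by omega)),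
      add_zero]

namespace Polynomial

open scoped Polynomial.Bivariate

section OneVariable

variable {K : Type*} [Field K] [CharZero K] {p q : K[X]}

theorem Splits.dvd_of_iterate_derivative_eval_eq_zero (hq : q.Splits) (hq0 : q ≠ 0)
    (h : ∀ x l, l < q.rootMultiplicity x → (derivative^[l] p).eval x = 0) : q ∣ p := by
  classical
  rcases eq_or_ne p 0 with rfl | hp
  · exact dvd_zero q
  refine hq.dvd_of_roots_le_roots hq0 (Multiset.le_iff_count.2 fun x => ?_)
  rw [count_roots, count_roots]
  rcases Nat.eq_zero_or_eq_succ_pred (q.rootMultiplicity x) with h0 | hsucc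
  · omega
  rw [hsucc, Nat.succ_le_iff, lt_rootMultiplicity_iff_isRoot_iterate_derivative hp]
  exact fun m hm => h x m (by omega)

theorem Splits.eq_zero_of_iterate_derivative_eval_eq_zero (hq : q.Splits) (hq0 : q ≠ 0)
    (hdeg : p.degree < q.degree)
    (h : ∀ x l, l < q.rootMultiplicity x → (derivative^[l] p).eval x = 0) : p = 0 :=
  eq_zero_of_dvd_of_degree_lt (hq.dvd_of_iterate_derivative_eval_eq_zero hq0 h) hdeg

end OneVariable

section Bivariate

variable (R : Type*) [CommRing R]

/-- `∂/∂X` on `R[X][Y]`. -/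
noncomputable def coeffDerivative : Derivation R R[X][Y] R[X][Y] :=
  (PolynomialModule.equivPolynomialSelf (R := R[X])).toLinearMap.compDer
    (derivative' (R := R)).mapCoeffs

variable {R}

@[simp]
theorem coeff_coeffDerivative (p : R[X][Y]) (i : ℕ) :
    (coeffDerivative R p).coeff i = derivative (p.coeff i) := rfl

theorem coeff_iterate_coeffDerivative (p : R[X][Y]) (k i : ℕ) :
    ((coeffDerivative R)^[k] p).coeff i = derivative^[k] (p.coeff i) := by
  induction k generalizing p with
  | zero => rfl
  | succ k ih => rw [Function.iterate_succ_apply, ih, coeff_coeffDerivative,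
      Function.iterate_succ_apply]

theorem degree_iterate_coeffDerivative_le (p : R[X][Y]) (k : ℕ) :
    ((coeffDerivative R)^[k] p).degree ≤ p.degree := by
  refine (degree_le_iff_coeff_zero _ _).2 fun i hi => ?_
  rw [coeff_iterate_coeffDerivative, coeff_eq_zero_of_degree_lt hi, iterate_map_zero]

theorem coeffDerivative_derivative (p : R[X][Y]) :
    coeffDerivative R (derivative p) = derivative (coeffDerivative R p) := by
  ext1 i
  simp [coeff_derivative]

theorem iterate_coeffDerivative_iterate_derivative (p : R[X][Y]) (k l : ℕ) :
    (coeffDerivative R)^[k] (derivative^[l] p) = derivative^[l] ((coeffDerivative R)^[k] p) :=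
  Function.Commute.iterate_iterate (fun p => coeffDerivative_derivative p) k l p

theorem iterate_coeffDerivative_C (f : R[X]) (k : ℕ) :
    (coeffDerivative R)^[k] (C f) = C (derivative^[k] f) := by
  ext1 i
  rw [coeff_iterate_coeffDerivative, coeff_C, coeff_C]
  split_ifs <;> simp

theorem coeffDerivative_map_C_mul (f : R[X]) (p : R[X][Y]) :
    coeffDerivative R (f.map C * p) = f.map C * coeffDerivative R p := by
  have : coeffDerivative R (f.map C) = 0 := by ext1 i; simp
  rw [Derivation.leibniz, this, smul_zero, add_zero, smul_eq_mul]

theorem iterate_coeffDerivative_map_C_mul (f : R[X]) (p : R[X][Y]) (k : ℕ) :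
    (coeffDerivative R)^[k] (f.map C * p) = f.map C * (coeffDerivative R)^[k] p := by
  induction k generalizing p with
  | zero => rfl
  | succ k ih => rw [Function.iterate_succ_apply, coeffDerivative_map_C_mul, ih,
      Function.iterate_succ_apply]

section Vanishing

variable {x y : R} {k l : ℕ}

theorem evalEval_iterate_coeffDerivative_iterate_derivative_C_mul {a : R[X]}
    (ha : ∀ j ≤ k, (derivative^[j] a).eval x = 0) (u : R[X][Y]) :
    evalEval x y ((coeffDerivative R)^[k] (derivative^[l] (C a * u))) = 0 := by
  rw [iterate_derivative_C_mul]
  refine (coeffDerivative R).map_iterate_mul_eq_zero (evalEvalRingHom x y) (fun j hj => ?_) _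
  rw [iterate_coeffDerivative_C, evalEvalRingHom_apply, eval_C]
  exact ha j hj

theorem evalEval_iterate_coeffDerivative_iterate_derivative_map_C_mul {b : R[X]}
    (hb : ∀ j ≤ l, (derivative^[j] b).eval y = 0) (v : R[X][Y]) :
    evalEval x y ((coeffDerivative R)^[k] (derivative^[l] (b.map C * v))) = 0 := by
  rw [iterate_coeffDerivative_iterate_derivative, iterate_coeffDerivative_map_C_mul]
  refine (derivative' (R := R[X])).map_iterate_mul_eq_zero (evalEvalRingHom x y)
    (fun j hj => ?_) _
  change evalEval x y (derivative^[j] (b.map C)) = 0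
  rw [iterate_derivative_map, evalEval_map_C]
  exact hb j hj

end Vanishing

/-- Condition (i) of the theorem for `p(X, Y)`, with `X` in the role of `z` and `Y` of `w`. -/
def VanishesWithMultiplicity (a b : R[X]) (p : R[X][Y]) : Prop :=
  ∀ x y, a.IsRoot x → b.IsRoot y → ∀ k l, k < a.rootMultiplicity x → l < b.rootMultiplicity y →
    evalEval x y ((coeffDerivative R)^[k] (derivative^[l] p)) = 0

variable {a b : R[X]} {p q : R[X][Y]}

theorem VanishesWithMultiplicity.add (hp : VanishesWithMultiplicity a b p)
    (hq : VanishesWithMultiplicity a b q) : VanishesWithMultiplicity a b (p + q) := by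
  intro x y hx hy k l hk hl
  rw [iterate_map_add, iterate_map_add, evalEval_add, hp x y hx hy k l hk hl,
    hq x y hx hy k l hk hl, add_zero]

theorem vanishesWithMultiplicity_C_mul (u : R[X][Y]) :
    VanishesWithMultiplicity a b (C a * u) := fun _ _ _ _ _ _ hk _ =>
  evalEval_iterate_coeffDerivative_iterate_derivative_C_mul
    (fun _ hj => isRoot_iterate_derivative_of_lt_rootMultiplicity (hj.trans_lt hk)) u

theorem vanishesWithMultiplicity_map_C_mul (v : R[X][Y]) :
    VanishesWithMultiplicity a b (b.map C * v) := fun _ _ _ _ _ _ _ hl =>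
  evalEval_iterate_coeffDerivative_iterate_derivative_map_C_mul
    (fun _ hj => isRoot_iterate_derivative_of_lt_rootMultiplicity (hj.trans_lt hl)) v

end Bivariate

section Field

variable {K : Type*} [Field K] [CharZero K] {a b : K[X]} {p : K[X][Y]}

theorem VanishesWithMultiplicity.C_dvd_of_degree_lt (hp : VanishesWithMultiplicity a b p)
    (ha : a.Splits) (ha0 : a ≠ 0) (hb : b.Splits) (hb0 : b ≠ 0) (hdeg : p.degree < b.degree) :
    C a ∣ p := by
  refine (C_dvd_iff_dvd_coeff _ _).2 fun i => ?_
  refine ha.dvd_of_iterate_derivative_eval_eq_zero ha0 fun x k hk => ?_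
  have hx : a.IsRoot x := (rootMultiplicity_pos ha0).1 (by omega)
  -- the restriction of `∂ₓᵏ p` to the line `X = x`
  set q := ((coeffDerivative K)^[k] p).map (evalRingHom x)
  have hq : q = 0 := by
    refine hb.eq_zero_of_iterate_derivative_eval_eq_zero hb0
      (degree_map_le.trans (degree_iterate_coeffDerivative_le p k) |>.trans_lt hdeg)
      fun y l hl => ?_
    have hy : b.IsRoot y := (rootMultiplicity_pos hb0).1 (by omega)
    rw [iterate_derivative_map, map_evalRingHom_eval,
      ← iterate_coeffDerivative_iterate_derivative]
    exact hp x y hx hy k l hk hl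
  simpa [q, coeff_iterate_coeffDerivative] using congrArg (coeff · i) hq

theorem VanishesWithMultiplicity.exists_eq_C_mul_add_map_C_mul
    (hp : VanishesWithMultiplicity a b p)
    (ha : a.Splits) (ha0 : a ≠ 0) (hb : b.Splits) (hb0 : b ≠ 0) :
    ∃ u v, p = C a * u + b.map C * v := by
  set c := C (C b.leadingCoeff⁻¹)
  set B := (b * C b.leadingCoeff⁻¹).map C
  have hBmonic : B.Monic := (monic_mul_leadingCoeff_inv hb0).map C
  have hB : B = b.map C * c := by simp [B, c, Polynomial.map_mul]
  have hrem : p %ₘ B = p + b.map C * -(c * (p /ₘ B)) := by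
    rw [modByMonic_eq_sub_mul_div p B, hB]; ring
  obtain ⟨u, hu⟩ : C a ∣ p %ₘ B := by
    refine VanishesWithMultiplicity.C_dvd_of_degree_lt ?_ ha ha0 hb hb0 ?_
    · rw [hrem]; exact hp.add (vanishesWithMultiplicity_map_C_mul _)
    · calc (p %ₘ B).degree < B.degree := degree_modByMonic_lt p hBmonic
        _ = b.degree := by
          rw [degree_map_eq_of_injective C_injective, degree_mul_leadingCoeff_inv b hb0]
  refine ⟨u, c * (p /ₘ B), ?_⟩
  rw [← hu, hrem]; ring

theorem vanishesWithMultiplicity_iff (ha : a.Splits) (ha0 : a ≠ 0) (hb : b.Splits) (hb0 : b ≠ 0) :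
    VanishesWithMultiplicity a b p ↔ ∃ u v, p = C a * u + b.map C * v := by
  refine ⟨fun hp => hp.exists_eq_C_mul_add_map_C_mul ha ha0 hb hb0, ?_⟩
  rintro ⟨u, v, rfl⟩
  exact (vanishesWithMultiplicity_C_mul u).add (vanishesWithMultiplicity_map_C_mul v)

end Field

namespace Bivariate

variable {R : Type*} [CommRing R]

theorem equivMvPolynomial_C (f : R[X]) :
    equivMvPolynomial R (C f) = aeval (MvPolynomial.X 0) f :=
  aevalAeval_C _ _ f

theorem equivMvPolynomial_map_C (f : R[X]) :
    equivMvPolynomial R (f.map C) = aeval (MvPolynomial.X 1) f := by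
  rw [← swap_C]
  exact (aevalAeval_swap _ _ _).trans (aevalAeval_C _ _ f)

theorem eval_equivMvPolynomial (x y : R) (p : R[X][Y]) :
    MvPolynomial.eval ![x, y] (equivMvPolynomial R p) = evalEval x y p := by
  have : (MvPolynomial.aeval ![x, y]).comp (equivMvPolynomial R).toAlgHom = aevalAeval x y := by
    ext <;> simp [equivMvPolynomial]
  rw [← coe_aevalAeval_eq_evalEval, ← this, ← MvPolynomial.coe_aeval_eq_eval]
  rfl

theorem iterate_pderiv_zero_equivMvPolynomial (p : R[X][Y]) (k : ℕ) :
    (MvPolynomial.pderiv 0)^[k] (equivMvPolynomial R p)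
      = equivMvPolynomial R ((coeffDerivative R)^[k] p) := by
  induction k generalizing p with
  | zero => rfl
  | succ k ih =>
    rw [Function.iterate_succ_apply, pderiv_zero_equivMvPolynomial, ih,
      Function.iterate_succ_apply]
    rfl

theorem iterate_pderiv_one_equivMvPolynomial (p : R[X][Y]) (l : ℕ) :
    (MvPolynomial.pderiv 1)^[l] (equivMvPolynomial R p)
      = equivMvPolynomial R (derivative^[l] p) := by
  induction l generalizing p with
  | zero => rfl
  | succ l ih => rw [Function.iterate_succ_apply, pderiv_one_equivMvPolynomial, ih,
      Function.iterate_succ_apply]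

end Bivariate

end Polynomial

open MvPolynomial

/-- For nonzero one-variable polynomials `a, b` over `ℂ` and
`s ∈ ℂ[z,w]`: all mixed partials `∂^{k+l} s/∂z^k ∂w^l` of order `k < d_a(ζ)`, `l < d_b(η)`
vanish at every pair of roots `(ζ, η)` of `(a, b)` iff
`s(z,w) = a(z) u(z,w) + b(w) v(z,w)` for some `u, v ∈ ℂ[z,w]`. -/
theorem stmt_8 (a b : Polynomial ℂ) (ha : a ≠ 0) (hb : b ≠ 0)
    (s : MvPolynomial (Fin 2) ℂ) :
    (∀ ζ η : ℂ, a.IsRoot ζ → b.IsRoot η →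
      ∀ k l : ℕ, k < Polynomial.rootMultiplicity ζ a → l < Polynomial.rootMultiplicity η b →
        MvPolynomial.eval ![ζ, η]
          ((fun t => MvPolynomial.pderiv (0 : Fin 2) t)^[k]
            ((fun t => MvPolynomial.pderiv (1 : Fin 2) t)^[l] s)) = 0) ↔
    ∃ u v : MvPolynomial (Fin 2) ℂ,
      s = Polynomial.aeval (X 0 : MvPolynomial (Fin 2) ℂ) a * u +
          Polynomial.aeval (X 1 : MvPolynomial (Fin 2) ℂ) b * v := by
  open Polynomial Polynomial.Bivariate in
  · obtain ⟨p, rfl⟩ := (equivMvPolynomial ℂ).surjective s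
    simp only [iterate_pderiv_one_equivMvPolynomial, iterate_pderiv_zero_equivMvPolynomial,
      eval_equivMvPolynomial, (equivMvPolynomial ℂ).surjective.exists, ← equivMvPolynomial_C,
      ← equivMvPolynomial_map_C, ← map_mul, ← map_add, (equivMvPolynomial ℂ).injective.eq_iff]
    exact vanishesWithMultiplicity_iff (IsAlgClosed.splits a) ha (IsAlgClosed.splits b) hb
end

section
/- Let a, b be nonzero one-variable polynomials over ℂ of degree m and n respectively. The linear map ϖ sending s ∈ ℂ[z,w] to the family of jets ((1/(k! l!)) ∂^{k+l} s/∂z^k ∂w^l (ζ, η)) indexed by roots ζ of a, roots η of b, and 0 ≤ k ≤ d_a(ζ) − 1, 0 ≤ l ≤ d_b(η) − 1, restricted to the space of polynomials whose degree in z is less than m and whose degree in w is less than n, is a linear bijection onto ℂ^{m·n} (the direct sum over all roots (ζ,η) of the spaces ℂ^{d_a(ζ)·d_b(η)}). -/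
/-!
Both sides have dimension `m * n`: the exponent box `{d | d 0 < m ∧ d 1 < n}` has `m * n`
elements and the jet index set has `(∑_ζ d_a(ζ)) * (∑_η d_b(η)) = m * n` elements, so it suffices
to show that the (linear) jet map is injective.

In one variable, a polynomial of degree `< deg a` whose derivatives of order `< d_a(ζ)` vanish
at every root `ζ` of `a` has at least `deg a` roots counted with multiplicity, hence is zero. In
two variables, apply this first in `z` to the restrictions of `∂_w^l s` to the lines `w = η` with
`l < d_b(η)`; these vanish, so the restriction of `s` to any line `z = const` has vanishing
`w`-jets at the roots of `b`, and applying the one-variable fact in `w` shows that `s` vanishes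
everywhere.
-/

open MvPolynomial
open scoped Polynomial Nat

namespace Polynomial

theorem eq_zero_of_iterate_derivative_isRoot {K : Type*} [Field K] [IsAlgClosed K] [CharZero K]
    {a p : K[X]} (hdeg : p.degree < a.natDegree)
    (h : ∀ ζ k, k < a.rootMultiplicity ζ → (derivative^[k] p).IsRoot ζ) : p = 0 := by
  by_contra hp
  have hroots : a.roots ≤ p.roots := by
    classical
    refine Multiset.le_iff_count.2 fun ζ => ?_
    rw [count_roots, count_roots]
    rcases Nat.eq_zero_or_pos (a.rootMultiplicity ζ) with h0 | hpos
    · simp [h0]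
    · have := lt_rootMultiplicity_of_isRoot_iterate_derivative (n := a.rootMultiplicity ζ - 1) hp
        fun k hk => h ζ k (by omega)
      omega
  have hcard := Multiset.card_le_card hroots
  rw [IsAlgClosed.card_roots_eq_natDegree] at hcard
  have := (natDegree_lt_iff_degree_lt hp).2 hdeg
  have := p.card_roots'
  omega

abbrev RootJetIndex {K : Type*} [CommRing K] (a : K[X]) :=
  {x : K × ℕ // x.2 < a.rootMultiplicity x.1}

def rootJetIndexEquiv {K : Type*} [CommRing K] [IsDomain K] [DecidableEq K] (a : K[X]) :
    RootJetIndex a ≃ Σ ζ : a.roots.toFinset, Fin (a.rootMultiplicity (ζ : K)) where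
  toFun x := ⟨⟨x.1.1, Multiset.mem_toFinset.2 <| Multiset.count_pos.1 <| by
    rw [count_roots]; exact x.2.trans_le' (Nat.zero_le _)⟩, ⟨x.1.2, x.2⟩⟩
  invFun y := ⟨(y.1, y.2), y.2.2⟩
  left_inv _ := rfl
  right_inv _ := rfl

instance {K : Type*} [CommRing K] [IsDomain K] (a : K[X]) : Finite (RootJetIndex a) := by
  classical exact .of_equiv _ (rootJetIndexEquiv a).symm

theorem natCard_rootJetIndex {K : Type*} [Field K] [IsAlgClosed K] (a : K[X]) :
    Nat.card (RootJetIndex a) = a.natDegree := by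
  classical
  rw [Nat.card_congr (rootJetIndexEquiv a), Nat.card_sigma]
  simp only [Nat.card_eq_fintype_card, Fintype.card_fin]
  rw [Finset.sum_coe_sort a.roots.toFinset fun ζ => a.rootMultiplicity ζ]
  simp_rw [← count_roots]
  rw [Multiset.toFinset_sum_count_eq, IsAlgClosed.card_roots_eq_natDegree]

end Polynomial

namespace MvPolynomial

variable {R σ : Type*} [CommRing R]

theorem mapsTo_pderiv_support_lt {i j : σ} (hij : i ≠ j) (m : ℕ) :
    Set.MapsTo (pderiv i) {p : MvPolynomial σ R | ∀ d ∈ p.support, d j < m}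
      {p | ∀ d ∈ p.support, d j < m} := by
  intro p hp d hd
  rw [mem_support_iff, coeff_pderiv] at hd
  simpa [Finsupp.single_apply, hij] using hp _ (mem_support_iff.2 (left_ne_zero_of_mul hd))

variable (R) in
noncomputable def restrictBidegree (m n : ℕ) : Submodule R (MvPolynomial (Fin 2) R) :=
  restrictSupport R {d | d 0 < m ∧ d 1 < n}

theorem mem_restrictBidegree {m n : ℕ} {p : MvPolynomial (Fin 2) R} :
    p ∈ restrictBidegree R m n ↔ ∀ d ∈ p.support, d 0 < m ∧ d 1 < n :=
  Iff.rfl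

variable [DecidableEq σ]

noncomputable def lineRestrict (i : σ) (x : σ → R) : MvPolynomial σ R →ₐ[R] R[X] :=
  aeval (Function.update (fun j => Polynomial.C (x j)) i Polynomial.X)

theorem eval_lineRestrict (i : σ) (x : σ → R) (y : R) (p : MvPolynomial σ R) :
    (lineRestrict i x p).eval y = eval (Function.update x i y) p := by
  induction p using MvPolynomial.induction_on with
  | C r => simp [lineRestrict]
  | add p q hp hq => simp [hp, hq]
  | mul_X p j hp =>
    rw [map_mul, Polynomial.eval_mul, hp, map_mul]
    by_cases hj : j = i
    · subst hj; simp [lineRestrict]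
    · simp [lineRestrict, hj]

theorem derivative_lineRestrict (i : σ) (x : σ → R) (p : MvPolynomial σ R) :
    Polynomial.derivative (lineRestrict i x p) = lineRestrict i x (pderiv i p) := by
  induction p using MvPolynomial.induction_on with
  | C r => simp [lineRestrict]
  | add p q hp hq => simp [hp, hq]
  | mul_X p j hp =>
    rw [map_mul, Polynomial.derivative_mul, hp, pderiv_mul, map_add, map_mul, map_mul]
    by_cases hj : j = i
    · subst hj; simp [lineRestrict]
    · simp [lineRestrict, hj, pderiv_X]

theorem iterate_derivative_lineRestrict (i : σ) (x : σ → R) (k : ℕ) (p : MvPolynomial σ R) :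
    Polynomial.derivative^[k] (lineRestrict i x p) = lineRestrict i x ((pderiv i)^[k] p) :=
  ((Function.Semiconj.iterate_right (f := lineRestrict i x)
    (fun p => (derivative_lineRestrict i x p).symm) k) p).symm

theorem degree_lineRestrict_monomial_le (i : σ) (x : σ → R) (d : σ →₀ ℕ) (c : R) :
    (lineRestrict i x (monomial d c)).degree ≤ d i := by
  rw [lineRestrict, aeval_monomial, Polynomial.algebraMap_eq]
  refine Polynomial.degree_le_natDegree.trans (WithBot.coe_le_coe.2 ?_)
  refine (Polynomial.natDegree_C_mul_le _ _).trans ((Polynomial.natDegree_prod_le _ _).trans ?_)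
  calc ∑ j ∈ d.support,
        (Function.update (fun j => Polynomial.C (x j)) i Polynomial.X j ^ d j).natDegree
      ≤ ∑ j ∈ d.support, if i = j then d j else 0 := by
        refine Finset.sum_le_sum fun j _ => Polynomial.natDegree_pow_le.trans ?_
        by_cases hj : i = j
        · subst hj; simpa using Nat.mul_le_mul_left (d i) Polynomial.natDegree_X_le
        · simp [Function.update_of_ne (Ne.symm hj), hj]
    _ ≤ d i := by rw [Finset.sum_ite_eq]; split_ifs <;> simp

theorem degree_lineRestrict_lt {i : σ} (x : σ → R) {m : ℕ} {p : MvPolynomial σ R}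
    (hp : ∀ d ∈ p.support, d i < m) : (lineRestrict i x p).degree < m := by
  rw [← Polynomial.mem_degreeLT, p.as_sum, map_sum]
  refine Submodule.sum_mem _ fun d hd => Polynomial.mem_degreeLT.2 ?_
  exact (degree_lineRestrict_monomial_le i x d _).trans_lt (by exact_mod_cast hp d hd)

open Polynomial in
theorem eq_zero_of_jets_eq_zero {K : Type*} [Field K] [IsAlgClosed K] [CharZero K]
    {a b : K[X]} {s : MvPolynomial (Fin 2) K}
    (hs : ∀ d ∈ s.support, d 0 < a.natDegree ∧ d 1 < b.natDegree)
    (h : ∀ (x : Fin 2 → K) (k l : ℕ), k < a.rootMultiplicity (x 0) →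
      l < b.rootMultiplicity (x 1) → eval x ((pderiv 0)^[k] ((pderiv 1)^[l] s)) = 0) :
    s = 0 := by
  have horizontal : ∀ (x : Fin 2 → K) l, l < b.rootMultiplicity (x 1) →
      lineRestrict 0 x ((pderiv 1)^[l] s) = 0 := by
    intro x l hl
    have hdeg := (mapsTo_pderiv_support_lt (R := K) (m := a.natDegree) one_ne_zero).iterate l
      fun d hd => (hs d hd).1
    refine eq_zero_of_iterate_derivative_isRoot (degree_lineRestrict_lt x hdeg) fun ζ k hk => ?_
    rw [IsRoot, iterate_derivative_lineRestrict, eval_lineRestrict]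
    exact h _ k l (by simpa using hk) (by simpa using hl)
  have vertical : ∀ x : Fin 2 → K, lineRestrict 1 x s = 0 := by
    intro x
    refine eq_zero_of_iterate_derivative_isRoot (degree_lineRestrict_lt x fun d hd => (hs d hd).2)
      fun η l hl => ?_
    rw [IsRoot, iterate_derivative_lineRestrict, eval_lineRestrict,
      ← Function.update_eq_self 0 (Function.update x 1 η), ← eval_lineRestrict,
      horizontal _ l (by simpa using hl), Polynomial.eval_zero]
  refine MvPolynomial.funext fun x => ?_
  simpa [eval_lineRestrict] using congr(Polynomial.eval (x 1) $(vertical x))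

end MvPolynomial

noncomputable def Finsupp.finTwoBoxEquiv (m n : ℕ) :
    {d : Fin 2 →₀ ℕ | d 0 < m ∧ d 1 < n} ≃ Fin m × Fin n where
  toFun d := (⟨d.1 0, d.2.1⟩, ⟨d.1 1, d.2.2⟩)
  invFun ij := ⟨Finsupp.single 0 (ij.1 : ℕ) + Finsupp.single 1 (ij.2 : ℕ), by simp⟩
  left_inv d := by ext i; fin_cases i <;> simp
  right_inv ij := by ext <;> simp

open Polynomial

section Jets

variable {K : Type*} [Field K]

instance (m n : ℕ) : FiniteDimensional K (restrictBidegree K m n) :=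
  have := Finite.of_equiv _ (Finsupp.finTwoBoxEquiv m n).symm
  .of_basis (basisRestrictSupport K _)

theorem MvPolynomial.finrank_restrictBidegree (m n : ℕ) :
    Module.finrank K (restrictBidegree K m n) = m * n := by
  rw [restrictBidegree, Module.finrank_eq_nat_card_basis (basisRestrictSupport K _),
    Nat.card_congr (Finsupp.finTwoBoxEquiv m n)]
  simp

abbrev JetIndex (a b : K[X]) :=
  {x : K × K × ℕ × ℕ // a.IsRoot x.1 ∧ b.IsRoot x.2.1 ∧
    x.2.2.1 < rootMultiplicity x.1 a ∧ x.2.2.2 < rootMultiplicity x.2.1 b}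

def jetIndexEquiv (a b : K[X]) : JetIndex a b ≃ RootJetIndex a × RootJetIndex b where
  toFun x := (⟨(x.1.1, x.1.2.2.1), x.2.2.2.1⟩, ⟨(x.1.2.1, x.1.2.2.2), x.2.2.2.2⟩)
  invFun y := ⟨(y.1.1.1, y.2.1.1, y.1.1.2, y.2.1.2),
    (rootMultiplicity_pos'.1 (y.1.2.trans_le' (Nat.zero_le _))).2,
    (rootMultiplicity_pos'.1 (y.2.2.trans_le' (Nat.zero_le _))).2, y.1.2, y.2.2⟩
  left_inv _ := rfl
  right_inv _ := rfl

instance (a b : K[X]) : Finite (JetIndex a b) :=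
  .of_equiv _ (jetIndexEquiv a b).symm

theorem finrank_jetIndex_fun [IsAlgClosed K] (a b : K[X]) :
    Module.finrank K (JetIndex a b → K) = a.natDegree * b.natDegree := by
  have := Fintype.ofFinite (JetIndex a b)
  rw [Module.finrank_fintype_fun_eq_card, Fintype.card_eq_nat_card,
    Nat.card_congr (jetIndexEquiv a b), Nat.card_prod, natCard_rootJetIndex, natCard_rootJetIndex]

noncomputable def jetMap (a b : K[X]) :
    restrictBidegree K a.natDegree b.natDegree →ₗ[K] (JetIndex a b → K) :=
  LinearMap.pi fun x => ((x.1.2.2.1 ! * x.1.2.2.2 ! : ℕ) : K)⁻¹ •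
    ((MvPolynomial.aeval ![x.1.1, x.1.2.1]).toLinearMap ∘ₗ ((pderiv 0).toLinearMap ^ x.1.2.2.1) ∘ₗ
      ((pderiv 1).toLinearMap ^ x.1.2.2.2) ∘ₗ Submodule.subtype _)

theorem jetMap_apply (a b : K[X]) (s : restrictBidegree K a.natDegree b.natDegree)
    (x : JetIndex a b) :
    jetMap a b s x = ((x.1.2.2.1 ! * x.1.2.2.2 ! : ℕ) : K)⁻¹ *
      eval ![x.1.1, x.1.2.1] ((pderiv 0)^[x.1.2.2.1] ((pderiv 1)^[x.1.2.2.2] s.1)) := by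
  simp [jetMap, Module.End.pow_apply]

theorem injective_jetMap [IsAlgClosed K] [CharZero K] (a b : K[X]) :
    Function.Injective (jetMap a b) := by
  refine (injective_iff_map_eq_zero _).2 fun s hs => Subtype.ext ?_
  refine eq_zero_of_jets_eq_zero s.2 fun x k l hk hl => ?_
  have := congr_fun hs ⟨(x 0, x 1, k, l),
    (rootMultiplicity_pos'.1 (hk.trans_le' (Nat.zero_le _))).2,
    (rootMultiplicity_pos'.1 (hl.trans_le' (Nat.zero_le _))).2, hk, hl⟩
  rw [jetMap_apply, show ![x 0, x 1] = x by ext i; fin_cases i <;> rfl] at this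
  simpa [Nat.factorial_ne_zero] using this

theorem bijective_jetMap [IsAlgClosed K] [CharZero K] (a b : K[X]) :
    Function.Bijective (jetMap a b) := by
  refine ⟨injective_jetMap a b,
    (LinearMap.injective_iff_surjective_of_finrank_eq_finrank ?_).1 (injective_jetMap a b)⟩
  rw [finrank_restrictBidegree, finrank_jetIndex_fun]

end Jets

theorem stmt_9_general (a b : Polynomial ℂ) :
    Function.Bijective
      (fun (s : {s : MvPolynomial (Fin 2) ℂ //
            ∀ d ∈ s.support, d 0 < a.natDegree ∧ d 1 < b.natDegree})
          (x : {x : ℂ × ℂ × ℕ × ℕ // a.IsRoot x.1 ∧ b.IsRoot x.2.1 ∧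
            x.2.2.1 < Polynomial.rootMultiplicity x.1 a ∧
            x.2.2.2 < Polynomial.rootMultiplicity x.2.1 b}) =>
        (((x.1.2.2.1.factorial * x.1.2.2.2.factorial : ℕ) : ℂ))⁻¹ *
          MvPolynomial.eval ![x.1.1, x.1.2.1]
            ((fun t => MvPolynomial.pderiv (0 : Fin 2) t)^[x.1.2.2.1]
              ((fun t => MvPolynomial.pderiv (1 : Fin 2) t)^[x.1.2.2.2] s.1))) := by
  convert (bijective_jetMap a b).comp
    (Equiv.subtypeEquivRight fun _ => mem_restrictBidegree.symm).bijective using 1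
  funext s x
  exact (jetMap_apply a b _ x).symm

/-- For nonzero `a, b ∈ ℂ[z]` of degrees `m, n`, the jet map `ϖ`,
`s ↦ ((1/(k! l!)) ∂^{k+l} s/∂z^k ∂w^l (ζ, η))` indexed by roots `ζ` of `a`, roots `η` of `b`
and `k < d_a(ζ)`, `l < d_b(η)`, restricted to the space of two-variable polynomials of
`z`-degree `< m` and `w`-degree `< n`, is a bijection onto the direct sum
`⊕_{(ζ,η)} ℂ^{d_a(ζ)·d_b(η)} ≅ ℂ^{m·n}` (realized as the space of all families indexed as
above).  The map is linear in `s` by construction. -/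
theorem stmt_9 (a b : Polynomial ℂ) (ha : a ≠ 0) (hb : b ≠ 0) :
    Function.Bijective
      (fun (s : {s : MvPolynomial (Fin 2) ℂ //
            ∀ d ∈ s.support, d 0 < a.natDegree ∧ d 1 < b.natDegree})
          (x : {x : ℂ × ℂ × ℕ × ℕ // a.IsRoot x.1 ∧ b.IsRoot x.2.1 ∧
            x.2.2.1 < Polynomial.rootMultiplicity x.1 a ∧
            x.2.2.2 < Polynomial.rootMultiplicity x.2.1 b}) =>
        (((x.1.2.2.1.factorial * x.1.2.2.2.factorial : ℕ) : ℂ))⁻¹ *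
          MvPolynomial.eval ![x.1.1, x.1.2.1]
            ((fun t => MvPolynomial.pderiv (0 : Fin 2) t)^[x.1.2.2.1]
              ((fun t => MvPolynomial.pderiv (1 : Fin 2) t)^[x.1.2.2.2] s.1))) :=
  stmt_9_general a b
end

section
/- Let m, n ≥ 1 be integers, D ⊆ ℝ² open, w ∈ D, and let h : D → ℂ be (m+n) times continuously differentiable. Then there exist constants C > 0 and δ > 0 such that for all z = (x, y) ∈ D with 0 < |z − w| < δ: |h(z) − Σ_{k=0}^{m−1} Σ_{l=0}^{n−1} (1/(k! l!)) (∂^{k+l} h/∂x^k ∂y^l)(w) (x − w₁)^k (y − w₂)^l| ≤ C · max(|x − w₁|^m, |y − w₂|^n), where w = (w₁, w₂). -/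
/-! Expand first in the direction `v`: Taylor's formula with integral remainder along the segment
from `w + s • u` to `w + s • u + t • v` leaves an error `O(|t| ^ n)`, with coefficients
`∂_v^l f (w + s • u)`. Expanding each of these in the direction `u` around `w` to order `m` costs
`O(|s| ^ m)`, and its coefficients `∂_u^k ∂_v^l f w` are the mixed derivatives
`D^(k+l) f w (u, …, u, v, …, v)`. For small `t` the weights `t ^ l / l!` are at most `1`, so the
two errors add up to `O(max (|s| ^ m) (|t| ^ n))`. -/

universe u

open Set Filter Topology Finset
open scoped Interval Nat

section IteratedFDeriv

variable {𝕜 E F : Type*} [NontriviallyNormedField 𝕜] [NormedAddCommGroup E] [NormedSpace 𝕜 E]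
  [NormedAddCommGroup F] [NormedSpace 𝕜 F] {f : E → F} {x : E}

theorem ContDiffAt.iteratedFDeriv_apply_const {k l : ℕ} (hf : ContDiffAt 𝕜 (k + l) f x)
    (v : E) : ContDiffAt 𝕜 k (fun y => iteratedFDeriv 𝕜 l f y (fun _ => v)) x :=
  (ContinuousMultilinearMap.apply 𝕜 (fun _ : Fin l => E) F fun _ => v).contDiff.contDiffAt.comp
    x (hf.iteratedFDeriv_right le_rfl)

theorem ContDiffAt.exists_eventually_norm_iteratedFDeriv_le {n : ℕ} (hf : ContDiffAt 𝕜 n f x) :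
    ∃ C, ∀ᶠ y in 𝓝 x, ‖iteratedFDeriv 𝕜 n f y‖ ≤ C :=
  ⟨_, ((hf.continuousAt_iteratedFDeriv le_rfl).norm.eventually
    (gt_mem_nhds (lt_add_one _))).mono fun _ => le_of_lt⟩

end IteratedFDeriv

-- `E` and `F` share a universe so that the induction, which passes from `f` to `fderiv 𝕜 f`,
-- stays inside one universe of codomains.
theorem iteratedFDeriv_apply_ite_eq_iteratedFDeriv_iteratedFDeriv {𝕜 : Type*} {E F : Type u}
    [NontriviallyNormedField 𝕜] [NormedAddCommGroup E] [NormedSpace 𝕜 E] [NormedAddCommGroup F]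
    [NormedSpace 𝕜 F] {f : E → F} {x : E} {k l : ℕ} (hf : ContDiffAt 𝕜 (k + l) f x) (u v : E) :
    iteratedFDeriv 𝕜 (k + l) f x (fun i => if (i : ℕ) < k then u else v) =
      iteratedFDeriv 𝕜 k (fun y => iteratedFDeriv 𝕜 l f y (fun _ => v)) x (fun _ => u) := by
  induction l generalizing F f with
  | zero => simp
  | succ l ih =>
    have hf' : ContDiffAt 𝕜 (k + l) (fderiv 𝕜 f) x := hf.fderiv_right (by push_cast; rfl)
    have hG := hf'.iteratedFDeriv_apply_const v
    calc iteratedFDeriv 𝕜 (k + l + 1) f x (fun i => if (i : ℕ) < k then u else v)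
        = iteratedFDeriv 𝕜 (k + l) (fderiv 𝕜 f) x (fun i => if (i : ℕ) < k then u else v) v := by
          rw [iteratedFDeriv_succ_apply_right, Fin.val_last, if_neg (by omega)]
          rfl
      _ = ContinuousLinearMap.apply 𝕜 F v (iteratedFDeriv 𝕜 k
            (fun y => iteratedFDeriv 𝕜 l (fderiv 𝕜 f) y (fun _ => v)) x (fun _ => u)) :=
          congrArg (fun L => L v) (ih hf')
      _ = iteratedFDeriv 𝕜 k (ContinuousLinearMap.apply 𝕜 F v ∘
            fun y => iteratedFDeriv 𝕜 l (fderiv 𝕜 f) y (fun _ => v)) x (fun _ => u) := by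
          rw [ContinuousLinearMap.iteratedFDeriv_comp_left _ hG le_rfl]; rfl
      _ = iteratedFDeriv 𝕜 k (fun y => iteratedFDeriv 𝕜 (l + 1) f y (fun _ => v)) x
            (fun _ => u) := by
          congr 2
          funext y
          rw [iteratedFDeriv_succ_apply_right]
          rfl

theorem norm_sub_sum_sum_smul_le {𝕜 F ι κ : Type*} [NormedField 𝕜] [NormedAddCommGroup F]
    [NormedSpace 𝕜 F] {I : Finset ι} {J : Finset κ} {X : F} {Y : κ → F} {T : ι → κ → F}
    {a : κ → 𝕜} {b : ι → 𝕜} {α : ℝ} {β : κ → ℝ} (ha : ∀ l ∈ J, ‖a l‖ ≤ 1)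
    (hX : ‖X - ∑ l ∈ J, a l • Y l‖ ≤ α) (hY : ∀ l ∈ J, ‖Y l - ∑ k ∈ I, b k • T k l‖ ≤ β l) :
    ‖X - ∑ k ∈ I, ∑ l ∈ J, (b k * a l) • T k l‖ ≤ α + ∑ l ∈ J, β l := by
  have hsplit : X - ∑ k ∈ I, ∑ l ∈ J, (b k * a l) • T k l =
      (X - ∑ l ∈ J, a l • Y l) + ∑ l ∈ J, a l • (Y l - ∑ k ∈ I, b k • T k l) := by
    simp only [smul_sub, smul_sum, smul_smul, sum_sub_distrib, mul_comm (a _)]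
    rw [sum_comm]
    abel
  rw [hsplit]
  refine (norm_add_le _ _).trans (add_le_add hX ((norm_sum_le _ _).trans (sum_le_sum ?_)))
  intro l hl
  rw [norm_smul]
  exact (mul_le_of_le_one_left (norm_nonneg _) (ha l hl)).trans (hY l hl)

section Taylor

variable {E F : Type*} [NormedAddCommGroup E] [NormedSpace ℝ E] [NormedAddCommGroup F]
  [NormedSpace ℝ F] [CompleteSpace F] {f : E → F} {U : Set E} {n : ℕ} {C : ℝ}

theorem Convex.norm_sub_sum_iteratedFDeriv_le (hU : Convex ℝ U)
    (hf : ∀ q ∈ U, ContDiffAt ℝ n f q) (hC : ∀ q ∈ U, ‖iteratedFDeriv ℝ n f q‖ ≤ C)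
    {x y : E} (hx : x ∈ U) (hxy : x + y ∈ U) :
    ‖f (x + y) - ∑ k ∈ range n, (k ! : ℝ)⁻¹ • iteratedFDeriv ℝ k f x (fun _ => y)‖ ≤
      C * ‖y‖ ^ n := by
  have hseg : ∀ t ∈ Icc (0 : ℝ) 1, x + t • y ∈ U := fun t ht => hU.add_smul_mem hx hxy ht
  cases n with
  | zero => simpa using hC _ hxy
  | succ n =>
    have hint : ∀ t ∈ Ι (0 : ℝ) 1, ‖(1 - t) ^ n • iteratedFDeriv ℝ (n + 1) f (x + t • y)
        (fun _ => y)‖ ≤ C * ‖y‖ ^ (n + 1) := by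
      intro t ht
      obtain ⟨ht0, ht1⟩ : 0 < t ∧ t ≤ 1 := by simpa using ht
      rw [norm_smul]
      refine (mul_le_of_le_one_left (norm_nonneg _) ?_).trans ?_
      · rw [norm_pow, Real.norm_of_nonneg (by linarith)]
        exact pow_le_one₀ (by linarith) (by linarith)
      · refine ((iteratedFDeriv ℝ (n + 1) f (x + t • y)).le_opNorm _).trans ?_
        rw [prod_const, card_fin]
        gcongr
        exact hC _ (hseg t ⟨ht0.le, ht1⟩)
    rw [map_add_eq_sum_add_integral_iteratedFDeriv fun t ht => hf _ (hseg t ht),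
      add_sub_cancel_left, norm_smul]
    refine (mul_le_of_le_one_left (norm_nonneg _) ?_).trans ?_
    · rw [Real.norm_of_nonneg (by positivity)]
      exact Nat.cast_inv_le_one n !
    · simpa using intervalIntegral.norm_integral_le_of_norm_le_const hint

theorem Convex.norm_sub_sum_iteratedFDeriv_smul_le (hU : Convex ℝ U)
    (hf : ∀ q ∈ U, ContDiffAt ℝ n f q) (hC : ∀ q ∈ U, ‖iteratedFDeriv ℝ n f q‖ ≤ C)
    {x v : E} {t : ℝ} (hx : x ∈ U) (hxt : x + t • v ∈ U) :
    ‖f (x + t • v) - ∑ k ∈ range n, ((k ! : ℝ)⁻¹ * t ^ k) • iteratedFDeriv ℝ k f x (fun _ => v)‖ ≤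
      C * ‖v‖ ^ n * |t| ^ n := by
  have hterm : ∀ k, ((k ! : ℝ)⁻¹ * t ^ k) • iteratedFDeriv ℝ k f x (fun _ => v) =
      (k ! : ℝ)⁻¹ • iteratedFDeriv ℝ k f x (fun _ => t • v) := fun k => by
    rw [(iteratedFDeriv ℝ k f x).map_smul_univ (fun _ => t) (fun _ => v), prod_const, card_fin,
      smul_smul]
  simp_rw [hterm]
  convert hU.norm_sub_sum_iteratedFDeriv_le hf hC hx hxt using 1
  rw [norm_smul, Real.norm_eq_abs, mul_pow]
  ring

end Taylor

section TwoScale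

variable {E F : Type u} [NormedAddCommGroup E] [NormedSpace ℝ E] [NormedAddCommGroup F]
  [NormedSpace ℝ F] [CompleteSpace F] {f : E → F} {m n : ℕ} {w u v : E}

theorem Convex.norm_sub_sum_sum_iteratedFDeriv_le {U : Set E} (hU : Convex ℝ U)
    (hf : ∀ q ∈ U, ContDiffAt ℝ (m + n) f q) {A : ℝ} (hA : ∀ q ∈ U, ‖iteratedFDeriv ℝ n f q‖ ≤ A)
    {B : ℕ → ℝ} (hB : ∀ l ∈ range n, ∀ q ∈ U,
      ‖iteratedFDeriv ℝ m (fun y => iteratedFDeriv ℝ l f y (fun _ => v)) q‖ ≤ B l)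
    {s t : ℝ} (hw : w ∈ U) (hs : w + s • u ∈ U) (hst : w + s • u + t • v ∈ U) (ht : |t| ≤ 1) :
    ‖f (w + s • u + t • v) - ∑ k ∈ range m, ∑ l ∈ range n,
        ((k ! : ℝ)⁻¹ * s ^ k * ((l ! : ℝ)⁻¹ * t ^ l)) •
          iteratedFDeriv ℝ (k + l) f w (fun i => if (i : ℕ) < k then u else v)‖ ≤
      A * ‖v‖ ^ n * |t| ^ n + ∑ l ∈ range n, B l * ‖u‖ ^ m * |s| ^ m := by
  refine norm_sub_sum_sum_smul_le (fun l _ => ?_)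
    (hU.norm_sub_sum_iteratedFDeriv_smul_le (fun q hq => (hf q hq).of_le (by simp)) hA hs hst)
    (fun l hl => ?_)
  · rw [norm_mul, norm_pow, norm_inv, RCLike.norm_natCast, Real.norm_eq_abs]
    exact mul_le_one₀ (Nat.cast_inv_le_one l !) (by positivity) (pow_le_one₀ (abs_nonneg _) ht)
  · have hl' : l ≤ n := (mem_range.1 hl).le
    convert hU.norm_sub_sum_iteratedFDeriv_smul_le
      (fun q hq => ((hf q hq).of_le (by norm_cast; omega)).iteratedFDeriv_apply_const v)
      (hB l hl) hw hs using 5 with k hk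
    exact iteratedFDeriv_apply_ite_eq_iteratedFDeriv_iteratedFDeriv
      ((hf w hw).of_le (by norm_cast; have := mem_range.1 hk; omega)) u v

theorem ContDiffAt.isBigO_sub_sum_sum_iteratedFDeriv (hf : ContDiffAt ℝ (m + n) f w) (u v : E) :
    (fun st : ℝ × ℝ => f (w + st.1 • u + st.2 • v) - ∑ k ∈ range m, ∑ l ∈ range n,
        ((k ! : ℝ)⁻¹ * st.1 ^ k * ((l ! : ℝ)⁻¹ * st.2 ^ l)) •
          iteratedFDeriv ℝ (k + l) f w (fun i => if (i : ℕ) < k then u else v)) =O[𝓝 0]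
      fun st => max (|st.1| ^ m) (|st.2| ^ n) := by
  obtain ⟨A, hA⟩ := (hf.of_le (by simp)).exists_eventually_norm_iteratedFDeriv_le (n := n)
  have hB : ∀ l ∈ range n, ∃ B, ∀ᶠ q in 𝓝 w,
      ‖iteratedFDeriv ℝ m (fun y => iteratedFDeriv ℝ l f y (fun _ => v)) q‖ ≤ B := by
    intro l hl
    have hfl : ContDiffAt ℝ (m + l) f w := hf.of_le (by norm_cast; have := mem_range.1 hl; omega)
    exact (hfl.iteratedFDeriv_apply_const v).exists_eventually_norm_iteratedFDeriv_le
  choose! B hB using hB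
  obtain ⟨r, hr, hball⟩ := Metric.eventually_nhds_iff_ball.1
    ((hf.eventually (by exact_mod_cast ENat.natCast_ne_top (m + n))).and
      (hA.and ((range n).eventually_all.2 hB)))
  have hwball := hball w (Metric.mem_ball_self hr)
  have eventually_mem_ball : ∀ {g : ℝ × ℝ → E}, Continuous g → g 0 = w →
      ∀ᶠ st in 𝓝 0, g st ∈ Metric.ball w r :=
    fun hg hg0 => (hg.tendsto' 0 w hg0).eventually (Metric.isOpen_ball.mem_nhds
      (Metric.mem_ball_self hr))
  refine .of_bound (A * ‖v‖ ^ n + ∑ l ∈ range n, B l * ‖u‖ ^ m) ?_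
  filter_upwards [eventually_mem_ball (g := fun st => w + st.1 • u) (by fun_prop) (by simp),
    eventually_mem_ball (g := fun st => w + st.1 • u + st.2 • v) (by fun_prop) (by simp),
    (continuous_snd.abs.tendsto' 0 0 (by simp)).eventually (Iic_mem_nhds one_pos)]
    with st hs hst ht
  refine ((convex_ball w r).norm_sub_sum_sum_iteratedFDeriv_le (fun q hq => (hball q hq).1)
    (fun q hq => (hball q hq).2.1) (fun l hl q hq => (hball q hq).2.2 l hl)
    (Metric.mem_ball_self hr) hs hst ht).trans ?_
  have hA0 : 0 ≤ A := (norm_nonneg _).trans hwball.2.1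
  have hB0 : ∀ l ∈ range n, 0 ≤ B l := fun l hl => (norm_nonneg _).trans (hwball.2.2 l hl)
  rw [Real.norm_of_nonneg (by positivity), add_mul, sum_mul]
  gcongr with l hl
  · exact le_max_right _ _
  · exact mul_nonneg (hB0 l hl) (by positivity)
  · exact le_max_left _ _

end TwoScale

theorem stmt_11_general (m n : ℕ)
    (D : Set (ℝ × ℝ)) (hD : IsOpen D) (w : ℝ × ℝ) (hw : w ∈ D)
    (h : ℝ × ℝ → ℂ) (hh : ContDiffOn ℝ (m + n : ℕ) h D) :
    ∃ C > (0 : ℝ), ∃ δ > (0 : ℝ), ∀ z ∈ D, z ≠ w → ‖z - w‖ < δ →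
      ‖h z - ∑ k ∈ Finset.range m, ∑ l ∈ Finset.range n,
          (((k.factorial * l.factorial : ℕ) : ℂ))⁻¹ *
            iteratedFDerivWithin ℝ (k + l) h D w
              (fun i => if (i : ℕ) < k then ((1, 0) : ℝ × ℝ) else ((0, 1) : ℝ × ℝ)) *
            ((z.1 - w.1 : ℝ) : ℂ) ^ k * ((z.2 - w.2 : ℝ) : ℂ) ^ l‖ ≤
        C * max (|z.1 - w.1| ^ m) (|z.2 - w.2| ^ n) := by
  have hf : ContDiffAt ℝ (m + n) h w := by exact_mod_cast hh.contDiffAt (hD.mem_nhds hw)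
  obtain ⟨C, hC, hO⟩ := (hf.isBigO_sub_sum_sum_iteratedFDeriv ((1, 0) : ℝ × ℝ) (0, 1)).exists_pos
  obtain ⟨δ, hδ, hbound⟩ := Metric.eventually_nhds_iff.1 hO.bound
  refine ⟨C, hC, δ, hδ, fun z _ _ hzw => ?_⟩
  have hz := hbound (y := z - w) (by simpa using hzw)
  have hpt : w + (z - w).1 • ((1, 0) : ℝ × ℝ) + (z - w).2 • ((0, 1) : ℝ × ℝ) = z := by
    ext <;> simp
  rw [hpt, Real.norm_of_nonneg (by positivity), Prod.fst_sub, Prod.snd_sub] at hz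
  refine (le_of_eq ?_).trans hz
  congr 2
  refine sum_congr rfl fun k _ => sum_congr rfl fun l _ => ?_
  rw [iteratedFDerivWithin_of_isOpen _ hD hw, Complex.real_smul]
  push_cast
  ring

/-- Taylor approximation adapted to the rectangle scale: if `h : D → ℂ`
(`D ⊆ ℝ²` open, `w ∈ D`) is `(m+n)` times continuously differentiable, then near `w`,
`h(z) - Σ_{k<m} Σ_{l<n} (1/(k!l!)) ∂^{k+l}h/∂x^k∂y^l(w) (x-w₁)^k (y-w₂)^l`
is bounded by `C·max(|x-w₁|^m, |y-w₂|^n)`. -/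
theorem stmt_11 (m n : ℕ) (hm : 1 ≤ m) (hn : 1 ≤ n)
    (D : Set (ℝ × ℝ)) (hD : IsOpen D) (w : ℝ × ℝ) (hw : w ∈ D)
    (h : ℝ × ℝ → ℂ) (hh : ContDiffOn ℝ (m + n : ℕ) h D) :
    ∃ C > (0 : ℝ), ∃ δ > (0 : ℝ), ∀ z ∈ D, z ≠ w → ‖z - w‖ < δ →
      ‖h z - ∑ k ∈ Finset.range m, ∑ l ∈ Finset.range n,
          (((k.factorial * l.factorial : ℕ) : ℂ))⁻¹ *
            iteratedFDerivWithin ℝ (k + l) h D w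
              (fun i => if (i : ℕ) < k then ((1, 0) : ℝ × ℝ) else ((0, 1) : ℝ × ℝ)) *
            ((z.1 - w.1 : ℝ) : ℂ) ^ k * ((z.2 - w.2 : ℝ) : ℂ) ^ l‖ ≤
        C * max (|z.1 - w.1| ^ m) (|z.2 - w.2| ^ n) :=
  stmt_11_general m n D hD w hw h hh
end

section
/- Let p, q be nonzero real polynomials, K ⊆ ℂ compact, and Z := {z ∈ ℂ : p(Re z) = 0 and q(Im z) = 0}. Assume there is C₀ > 0 with max(|p(Re z)|, |q(Im z)|) ≤ C₀ · |p(Re z) + q(Im z)| for all z ∈ K. Let φ : K \ Z → ℂ be bounded and Borel measurable, and suppose that for each w ∈ K ∩ Z there are complex numbers c^w_{k,l} (0 ≤ k ≤ d_p(Re w) − 1, 0 ≤ l ≤ d_q(Im w) − 1) and constants C_w, δ_w > 0 such that |φ(z) − Σ_{k,l} c^w_{k,l} Re(z−w)^k Im(z−w)^l| ≤ C_w · max(|Re(z−w)|^{d_p(Re w)}, |Im(z−w)|^{d_q(Im w)}) for all z ∈ K \ Z with 0 < |z−w| < δ_w. Then there exist a polynomial s ∈ ℂ[z,w] with (1/(k!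 l!)) ∂^{k+l} s/∂z^k ∂w^l (Re w, Im w) = c^w_{k,l} for all w ∈ K ∩ Z and all such k, l, and a bounded Borel measurable function g : K \ Z → ℂ, such that φ(z) = s(Re z, Im z) + (p(Re z) + q(Im z)) · g(z) for all z ∈ K \ Z. -/
/-!
For `w ∈ K ∩ Z` let `J_w := ∑ c^w_{k,l} (X₀ - Re w)^k (X₁ - Im w)^l` be the prescribed jet. The
ideals `((X₀ - Re w)^{d_p(Re w)}, (X₁ - Im w)^{d_q(Im w)})` at distinct points are pairwise
comaximal, so the Chinese remainder theorem gives one `s` congruent to every `J_w` modulo the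
ideal at `w`. The mixed derivatives of order `(k, l) < (d_p, d_q)` at `w` vanish on that ideal,
so those of `s` are the ones of `J_w`.

Put `g := (φ - s(Re ·, Im ·)) / (p(Re ·) + q(Im ·))`. Near `w ∈ K ∩ Z` both `φ - J_w` and
`s - J_w` are `O(max(|Re(z - w)|^{d_p}, |Im(z - w)|^{d_q}))`. Since `|x - a|^{d_p(a)} = O(p(x))`
near `a`, the domination hypothesis bounds this by `O(p(Re z) + q(Im z))`. Away from `Z` the
denominator does not vanish on `K`, so `g` is locally bounded there too, and compactness of `K`
makes the bound global.
-/

open MvPolynomial Finset Filter Topology Asymptotics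

theorem Nat.cast_descFactorial_mul_zero_pow {R : Type*} [Semiring R] (n k : ℕ) :
    (n.descFactorial k : R) * 0 ^ (n - k) = if n = k then (k.factorial : R) else 0 := by
  rcases lt_trichotomy n k with h | rfl | h
  · simp [Nat.descFactorial_eq_zero_iff_lt.2 h, h.ne]
  · simp [Nat.descFactorial_self]
  · simp [h.ne', zero_pow (Nat.sub_ne_zero_of_lt h)]

theorem Ideal.isCoprime_of_mem {R : Type*} [CommSemiring R] {I J : Ideal R} {a b : R}
    (h : IsCoprime a b) (ha : a ∈ I) (hb : b ∈ J) : IsCoprime I J := by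
  obtain ⟨u, v, huv⟩ := h
  exact Ideal.isCoprime_iff_exists.2 ⟨u * a, I.mul_mem_left u ha, v * b, J.mul_mem_left v hb, huv⟩

namespace MvPolynomial

section PDeriv

variable {R σ : Type*} [CommRing R] {i j : σ}

theorem iterate_pderiv_mul_of_pderiv_eq_zero {f : MvPolynomial σ R} (hf : pderiv i f = 0)
    (k : ℕ) (g : MvPolynomial σ R) : (pderiv i)^[k] (f * g) = f * (pderiv i)^[k] g := by
  induction k generalizing g with
  | zero => rfl
  | succ k ih => simp [Function.iterate_succ_apply, hf, ih]

theorem pderiv_X_sub_C_pow_of_ne (h : i ≠ j) (a : R) (n : ℕ) :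
    pderiv i ((X j - C a) ^ n) = 0 := by
  simp [pderiv_X_of_ne h.symm]

theorem iterate_pderiv_X_sub_C_pow (a : R) (n k : ℕ) :
    (pderiv i)^[k] ((X i - C a) ^ n) =
      (n.descFactorial k : MvPolynomial σ R) * (X i - C a) ^ (n - k) := by
  induction k with
  | zero => simp
  | succ k ih =>
    rw [Function.iterate_succ_apply', ih, ← nsmul_eq_mul, map_nsmul, pderiv_pow,
      Nat.descFactorial_succ, Nat.sub_sub]
    simp only [map_sub, pderiv_C, sub_zero, pderiv_X_self, mul_one, nsmul_eq_mul]
    push_cast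
    ring

theorem X_sub_C_pow_dvd_iterate_pderiv_of_ne (h : i ≠ j) (a : R) (n k : ℕ)
    {f : MvPolynomial σ R} (hf : (X j - C a) ^ n ∣ f) :
    (X j - C a) ^ n ∣ (pderiv i)^[k] f := by
  obtain ⟨g, rfl⟩ := hf
  rw [iterate_pderiv_mul_of_pderiv_eq_zero (pderiv_X_sub_C_pow_of_ne h a n)]
  exact dvd_mul_right _ _

theorem X_sub_C_pow_dvd_iterate_pderiv (a : R) (n k : ℕ) {f : MvPolynomial σ R}
    (hf : (X i - C a) ^ n ∣ f) : (X i - C a) ^ (n - k) ∣ (pderiv i)^[k] f := by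
  induction k with
  | zero => simpa
  | succ k ih =>
    rw [Function.iterate_succ_apply']
    rcases Nat.lt_or_ge k n with hk | hk
    · obtain ⟨g, hg⟩ := ih
      rw [hg, show n - k = n - (k + 1) + 1 by omega, pderiv_mul, pderiv_pow]
      simp only [map_sub, pderiv_C, sub_zero, pderiv_X_self, mul_one, Nat.add_sub_cancel]
      exact ((dvd_mul_left _ _).mul_right _).add ((pow_dvd_pow _ (Nat.le_succ _)).mul_right _)
    · simp [show n - (k + 1) = 0 by omega]

theorem eval_eq_zero_of_X_sub_C_pow_dvd (x : σ → R) {n : ℕ} (hn : n ≠ 0) {f : MvPolynomial σ R}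
    (hf : (X i - C (x i)) ^ n ∣ f) : eval x f = 0 := by
  obtain ⟨g, rfl⟩ := hf
  simp [zero_pow hn]

noncomputable def evalMixedPDeriv (x : σ → R) (i j : σ) (k l : ℕ) : MvPolynomial σ R →ₗ[R] R :=
  (aeval x).toLinearMap ∘ₗ ((pderiv i).toLinearMap ^ k) ∘ₗ ((pderiv j).toLinearMap ^ l)

theorem evalMixedPDeriv_apply (x : σ → R) (k l : ℕ) (u : MvPolynomial σ R) :
    evalMixedPDeriv x i j k l u = eval x ((pderiv i)^[k] ((pderiv j)^[l] u)) := by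
  simp [evalMixedPDeriv, Module.End.pow_apply]

theorem evalMixedPDeriv_X_sub_C_pow_mul (h : i ≠ j) (x : σ → R) (k l k' l' : ℕ) :
    evalMixedPDeriv x i j k l ((X i - C (x i)) ^ k' * (X j - C (x j)) ^ l') =
      (if k' = k then (k.factorial : R) else 0) * (if l' = l then (l.factorial : R) else 0) := by
  rw [evalMixedPDeriv_apply,
    iterate_pderiv_mul_of_pderiv_eq_zero (pderiv_X_sub_C_pow_of_ne h.symm _ _),
    iterate_pderiv_X_sub_C_pow, mul_comm,
    iterate_pderiv_mul_of_pderiv_eq_zero (by simp [pderiv_X_sub_C_pow_of_ne h]),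
    iterate_pderiv_X_sub_C_pow]
  simp only [map_mul, map_pow, map_sub, map_natCast, eval_X, eval_C, sub_self]
  rw [← Nat.cast_descFactorial_mul_zero_pow, ← Nat.cast_descFactorial_mul_zero_pow]
  ring

theorem evalMixedPDeriv_eq_zero_of_mem_span (h : i ≠ j) (x : σ → R) {k l m n : ℕ}
    (hk : k < m) (hl : l < n) {u : MvPolynomial σ R}
    (hu : u ∈ Ideal.span {(X i - C (x i)) ^ m, (X j - C (x j)) ^ n}) :
    evalMixedPDeriv x i j k l u = 0 := by
  obtain ⟨a, b, rfl⟩ := Ideal.mem_span_pair.1 hu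
  rw [map_add, evalMixedPDeriv_apply, evalMixedPDeriv_apply]
  have hi : (X i - C (x i)) ^ (m - k) ∣ (pderiv i)^[k] ((pderiv j)^[l] (a * (X i - C (x i)) ^ m)) :=
    X_sub_C_pow_dvd_iterate_pderiv _ _ _
      (X_sub_C_pow_dvd_iterate_pderiv_of_ne h.symm _ _ _ (dvd_mul_left _ _))
  have hj : (X j - C (x j)) ^ (n - l) ∣ (pderiv i)^[k] ((pderiv j)^[l] (b * (X j - C (x j)) ^ n)) :=
    X_sub_C_pow_dvd_iterate_pderiv_of_ne h _ _ _
      (X_sub_C_pow_dvd_iterate_pderiv _ _ _ (dvd_mul_left _ _))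
  rw [eval_eq_zero_of_X_sub_C_pow_dvd x (by omega) hi,
    eval_eq_zero_of_X_sub_C_pow_dvd x (by omega) hj, add_zero]

noncomputable def jetPoly (x : σ → R) (i j : σ) (m n : ℕ) (c : ℕ → ℕ → R) : MvPolynomial σ R :=
  ∑ k ∈ range m, ∑ l ∈ range n, c k l • ((X i - C (x i)) ^ k * (X j - C (x j)) ^ l)

theorem evalMixedPDeriv_jetPoly (h : i ≠ j) (x : σ → R) {k l m n : ℕ} (hk : k < m) (hl : l < n)
    (c : ℕ → ℕ → R) :
    evalMixedPDeriv x i j k l (jetPoly x i j m n c) = k.factorial * l.factorial * c k l := by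
  simp only [jetPoly, map_sum, map_smul, evalMixedPDeriv_X_sub_C_pow_mul h, smul_eq_mul,
    mul_ite, mul_zero, ite_mul, zero_mul, sum_ite_eq', mem_range, hk, hl, if_true]
  ring

theorem evalMixedPDeriv_eq_of_sub_mem_span (h : i ≠ j) (x : σ → R) {k l m n : ℕ}
    (hk : k < m) (hl : l < n) (c : ℕ → ℕ → R) {s : MvPolynomial σ R}
    (hs : s - jetPoly x i j m n c ∈ Ideal.span {(X i - C (x i)) ^ m, (X j - C (x j)) ^ n}) :
    evalMixedPDeriv x i j k l s = k.factorial * l.factorial * c k l := by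
  rw [← evalMixedPDeriv_jetPoly h x hk hl c, ← sub_eq_zero, ← map_sub]
  exact evalMixedPDeriv_eq_zero_of_mem_span h x hk hl hs

end PDeriv

section Interpolation

variable {F σ ι : Type*} [Field F]

theorem isCoprime_X_sub_C_pow (i : σ) {a b : F} (hab : a ≠ b) (m n : ℕ) :
    IsCoprime ((X i - C a : MvPolynomial σ F) ^ m) ((X i - C b) ^ n) := by
  refine IsCoprime.pow ⟨C (b - a)⁻¹, -C (b - a)⁻¹, ?_⟩
  have h : C (b - a)⁻¹ * (C b - C a : MvPolynomial σ F) = 1 := by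
    rw [← map_sub, ← map_mul, inv_mul_cancel₀ (sub_ne_zero.2 hab.symm), map_one]
  linear_combination h

theorem exists_sub_mem_span_X_sub_C_pow [Finite ι] {i j : σ} (x : ι → σ → F)
    (hx : Function.Injective fun t => (x t i, x t j)) (m n : ι → ℕ) (J : ι → MvPolynomial σ F) :
    ∃ s : MvPolynomial σ F, ∀ t,
      s - J t ∈ Ideal.span {(X i - C (x t i)) ^ m t, (X j - C (x t j)) ^ n t} := by
  refine Ideal.exists_forall_sub_mem_ideal (fun t t' htt' => ?_) J
  have hne : x t i ≠ x t' i ∨ x t j ≠ x t' j := by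
    by_contra! h
    exact htt' (hx (Prod.ext h.1 h.2))
  rcases hne with hne | hne
  · exact Ideal.isCoprime_of_mem (isCoprime_X_sub_C_pow i hne (m t) (m t'))
      (Ideal.subset_span (by simp)) (Ideal.subset_span (by simp))
  · exact Ideal.isCoprime_of_mem (isCoprime_X_sub_C_pow j hne (n t) (n t'))
      (Ideal.subset_span (by simp)) (Ideal.subset_span (by simp))

end Interpolation

end MvPolynomial

theorem IsCompact.exists_bound_of_isBigO_nhdsWithin {X E F : Type*} [TopologicalSpace X] [Norm E]
    [SeminormedAddGroup F] {K s : Set X} {f : X → E} {g : X → F} (hK : IsCompact K)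
    (h : ∀ x ∈ K, f =O[𝓝[s] x] g) : ∃ C, ∀ x ∈ K ∩ s, ‖f x‖ ≤ C * ‖g x‖ := by
  refine hK.induction_on (p := fun t => ∃ C, ∀ x ∈ t ∩ s, ‖f x‖ ≤ C * ‖g x‖) ⟨0, by simp⟩
    (fun t t' htt' ⟨C, hC⟩ => ⟨C, fun x hx => hC x ⟨htt' hx.1, hx.2⟩⟩) ?_ ?_
  · rintro t t' ⟨C, hC⟩ ⟨C', hC'⟩
    refine ⟨max C C', fun x ⟨hx, hxs⟩ => ?_⟩
    rcases hx with hx | hx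
    · exact (hC x ⟨hx, hxs⟩).trans (by gcongr; exact le_max_left _ _)
    · exact (hC' x ⟨hx, hxs⟩).trans (by gcongr; exact le_max_right _ _)
  · intro x hx
    obtain ⟨C, hC⟩ := (h x hx).bound
    obtain ⟨U, hU, hxU, hUs⟩ := mem_nhdsWithin.1 hC
    exact ⟨U, mem_nhdsWithin_of_mem_nhds (hU.mem_nhds hxU), C, fun y hy => hUs hy⟩

theorem Asymptotics.isBigO_const_left_of_tendsto {α E F : Type*} [NormedAddCommGroup E]
    [NormedAddCommGroup F] {l : Filter α} {f : α → F} {y : F} (h : Tendsto f l (𝓝 y)) (hy : y ≠ 0)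
    (c : E) : (fun _ => c) =O[l] f := by
  rcases eq_or_ne c 0 with rfl | hc
  · exact isBigO_zero _ _
  · exact (isBigO_const_left_iff_pos_le_norm hc).2 ⟨‖y‖ / 2, by positivity,
      h.norm.eventually_const_le (half_lt_self (norm_pos_iff.2 hy))⟩

theorem Polynomial.isBigO_X_sub_C_pow_rootMultiplicity {𝕜 : Type*} [NormedField 𝕜]
    {p : Polynomial 𝕜} (hp : p ≠ 0) (a : 𝕜) :
    (fun x => (x - a) ^ p.rootMultiplicity a) =O[𝓝 a] fun x => p.eval x := by
  set p₁ := p /ₘ (X - C a) ^ p.rootMultiplicity a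
  have h₁ : (fun _ => (1 : 𝕜)) =O[𝓝 a] fun x => p₁.eval x :=
    isBigO_const_left_of_tendsto (p₁.continuous.tendsto a)
      (eval_divByMonic_pow_rootMultiplicity_ne_zero a hp) 1
  refine ((isBigO_refl _ _).mul h₁).congr (fun x => mul_one _) (fun x => ?_)
  conv_rhs => rw [← pow_mul_divByMonic_rootMultiplicity_eq p a]
  simp [p₁]

theorem Polynomial.isBigO_abs_sub_pow_rootMultiplicity_comp {X : Type*} [TopologicalSpace X]
    {p : Polynomial ℝ} (hp : p ≠ 0) {f : X → ℝ} {w : X} (hf : ContinuousAt f w) :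
    (fun z => |f z - f w| ^ p.rootMultiplicity (f w)) =O[𝓝 w] fun z => p.eval (f z) :=
  ((p.isBigO_X_sub_C_pow_rootMultiplicity hp (f w)).comp_tendsto hf).norm_left.congr_left
    fun z => by simp

theorem Asymptotics.isBigO_nhdsWithin_of_norm_sub_lt {E F : Type*} [SeminormedAddCommGroup E]
    [Norm F] {S : Set E} {w : E} (hw : w ∉ S) {f : E → F} {g : E → ℝ}
    (h : ∃ C > (0 : ℝ), ∃ δ > (0 : ℝ), ∀ z ∈ S, z ≠ w → ‖z - w‖ < δ → ‖f z‖ ≤ C * g z) :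
    f =O[𝓝[S] w] g := by
  obtain ⟨C, hC, δ, hδ, hf⟩ := h
  refine IsBigO.of_bound C ?_
  filter_upwards [self_mem_nhdsWithin, nhdsWithin_le_nhds (Metric.ball_mem_nhds w hδ)]
    with z hzS hzw
  exact (hf z hzS (ne_of_mem_of_not_mem hzS hw) (mem_ball_iff_norm.1 hzw)).trans
    (mul_le_mul_of_nonneg_left (Real.le_norm_self _) hC.le)

namespace Complex

def reIm (z : ℂ) : Fin 2 → ℂ := ![(z.re : ℂ), (z.im : ℂ)]

@[simp] theorem reIm_zero (z : ℂ) : reIm z 0 = z.re := rfl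

@[simp] theorem reIm_one (z : ℂ) : reIm z 1 = z.im := rfl

theorem continuous_reIm : Continuous reIm := by
  unfold reIm
  fun_prop

theorem injective_reIm_pair : Function.Injective fun z => (reIm z 0, reIm z 1) := by
  intro z w h
  simp only [reIm_zero, reIm_one, Prod.mk.injEq, ofReal_inj] at h
  exact Complex.ext h.1 h.2

theorem finite_setOf_eval_re_eq_zero_and_eval_im_eq_zero {p q : Polynomial ℝ} (hp : p ≠ 0)
    (hq : q ≠ 0) : {z : ℂ | p.eval z.re = 0 ∧ q.eval z.im = 0}.Finite :=
  ((Polynomial.finite_setOfPred_isRoot hp).prod (Polynomial.finite_setOfPred_isRoot hq)).preimage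
    equivRealProd.injective.injOn

theorem eval_reIm_jetPoly (z w : ℂ) (m n : ℕ) (c : ℕ → ℕ → ℂ) :
    eval (reIm z) (jetPoly (reIm w) 0 1 m n c) = ∑ k ∈ range m, ∑ l ∈ range n,
      c k l * ((z - w).re : ℂ) ^ k * ((z - w).im : ℂ) ^ l := by
  simp [jetPoly, mul_assoc]

theorem isBigO_eval_reIm_of_mem_span {w : ℂ} {m n : ℕ} {u : MvPolynomial (Fin 2) ℂ}
    (hu : u ∈ Ideal.span {(X 0 - C (reIm w 0)) ^ m, (X 1 - C (reIm w 1)) ^ n}) :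
    (fun z => eval (reIm z) u) =O[𝓝 w] fun z => max (|(z - w).re| ^ m) (|(z - w).im| ^ n) := by
  obtain ⟨a, b, rfl⟩ := Ideal.mem_span_pair.1 hu
  have hbdd : ∀ v : MvPolynomial (Fin 2) ℂ, (fun z => eval (reIm z) v) =O[𝓝 w] fun _ => (1 : ℝ) :=
    fun v => ((v.continuous_eval.comp continuous_reIm).tendsto w).isBigO_one ℝ
  have hre : (fun z => eval (reIm z) ((X 0 - C (reIm w 0)) ^ m)) =O[𝓝 w]
      fun z => max (|(z - w).re| ^ m) (|(z - w).im| ^ n) :=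
    IsBigO.of_bound 1 (Eventually.of_forall fun z => by
      simpa [← ofReal_sub] using (le_max_left (|z.re - w.re| ^ m) _).trans (le_abs_self _))
  have him : (fun z => eval (reIm z) ((X 1 - C (reIm w 1)) ^ n)) =O[𝓝 w]
      fun z => max (|(z - w).re| ^ m) (|(z - w).im| ^ n) :=
    IsBigO.of_bound 1 (Eventually.of_forall fun z => by
      simpa [← ofReal_sub] using (le_max_right _ (|z.im - w.im| ^ n)).trans (le_abs_self _))
  simpa using ((hbdd a).mul hre).add ((hbdd b).mul him)

theorem isBigO_max_pow_rootMultiplicity {p q : Polynomial ℝ} (hp : p ≠ 0) (hq : q ≠ 0)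
    {K : Set ℂ} {C₀ : ℝ}
    (hdom : ∀ z ∈ K, max |p.eval z.re| |q.eval z.im| ≤ C₀ * |p.eval z.re + q.eval z.im|) (w : ℂ) :
    (fun z => max (|(z - w).re| ^ p.rootMultiplicity w.re) (|(z - w).im| ^ q.rootMultiplicity w.im))
      =O[𝓝[K] w] fun z => p.eval z.re + q.eval z.im := by
  have hpD : (fun z => p.eval z.re) =O[𝓝[K] w] fun z => p.eval z.re + q.eval z.im :=
    IsBigO.of_bound C₀ (eventually_nhdsWithin_of_forall fun z hz =>
      (le_max_left _ _).trans (hdom z hz))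
  have hqD : (fun z => q.eval z.im) =O[𝓝[K] w] fun z => p.eval z.re + q.eval z.im :=
    IsBigO.of_bound C₀ (eventually_nhdsWithin_of_forall fun z hz =>
      (le_max_right _ _).trans (hdom z hz))
  have hre := ((Polynomial.isBigO_abs_sub_pow_rootMultiplicity_comp hp
    continuous_re.continuousAt).mono nhdsWithin_le_nhds).trans hpD
  have him := ((Polynomial.isBigO_abs_sub_pow_rootMultiplicity_comp hq
    continuous_im.continuousAt).mono nhdsWithin_le_nhds).trans hqD
  refine (IsBigO.of_bound 1 (Eventually.of_forall fun z => ?_)).trans (hre.add him)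
  rw [one_mul, Real.norm_of_nonneg (by positivity)]
  exact (max_le_add_of_nonneg (by positivity) (by positivity)).trans (Real.le_norm_self _)

theorem isBigO_sub_eval_of_jet {p q : Polynomial ℝ} (hp : p ≠ 0) (hq : q ≠ 0) {K S : Set ℂ}
    (hSK : S ⊆ K) {C₀ : ℝ}
    (hdom : ∀ z ∈ K, max |p.eval z.re| |q.eval z.im| ≤ C₀ * |p.eval z.re + q.eval z.im|)
    {φ : ℂ → ℂ} {w : ℂ} (hw : w ∉ S) {c : ℕ → ℕ → ℂ}
    (hφ : ∃ Cw > (0 : ℝ), ∃ δw > (0 : ℝ), ∀ z ∈ S, z ≠ w → ‖z - w‖ < δw →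
      ‖φ z - ∑ k ∈ range (p.rootMultiplicity w.re), ∑ l ∈ range (q.rootMultiplicity w.im),
          c k l * ((z - w).re : ℂ) ^ k * ((z - w).im : ℂ) ^ l‖ ≤
        Cw * max (|(z - w).re| ^ p.rootMultiplicity w.re) (|(z - w).im| ^ q.rootMultiplicity w.im))
    {s : MvPolynomial (Fin 2) ℂ}
    (hs : s - jetPoly (reIm w) 0 1 (p.rootMultiplicity w.re) (q.rootMultiplicity w.im) c ∈
      Ideal.span {(X 0 - C (reIm w 0)) ^ p.rootMultiplicity w.re,
        (X 1 - C (reIm w 1)) ^ q.rootMultiplicity w.im}) :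
    (fun z => φ z - eval (reIm z) s) =O[𝓝[S] w] fun z => p.eval z.re + q.eval z.im := by
  have hφJ := (isBigO_nhdsWithin_of_norm_sub_lt hw hφ).congr_left fun z => by
    rw [← eval_reIm_jetPoly]
  have hsJ := (isBigO_eval_reIm_of_mem_span hs).mono (nhdsWithin_le_nhds (s := S))
  have hω := (isBigO_max_pow_rootMultiplicity hp hq hdom w).mono (nhdsWithin_mono w hSK)
  exact ((hφJ.sub hsJ).trans hω).congr_left fun z => by simp

theorem isBigO_sub_eval_of_ne_zero {p q : Polynomial ℝ} {S : Set ℂ} {φ : ℂ → ℂ} {Cφ : ℝ}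
    (hφ : ∀ z ∈ S, ‖φ z‖ ≤ Cφ) (s : MvPolynomial (Fin 2) ℂ) {w : ℂ}
    (hw : p.eval w.re + q.eval w.im ≠ 0) :
    (fun z => φ z - eval (reIm z) s) =O[𝓝[S] w] fun z => p.eval z.re + q.eval z.im := by
  have hφ1 : φ =O[𝓝[S] w] fun _ => (1 : ℝ) :=
    IsBigO.of_bound Cφ (eventually_nhdsWithin_of_forall fun z hz => by simpa using hφ z hz)
  have hs1 : (fun z => eval (reIm z) s) =O[𝓝[S] w] fun _ => (1 : ℝ) :=
    (((s.continuous_eval.comp continuous_reIm).tendsto w).mono_left nhdsWithin_le_nhds).isBigO_one ℝ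
  have hD : Continuous fun z : ℂ => p.eval z.re + q.eval z.im := by fun_prop
  exact (hφ1.sub hs1).trans
    (isBigO_const_left_of_tendsto ((hD.tendsto w).mono_left nhdsWithin_le_nhds) hw 1)

end Complex

theorem stmt_13_general (p q : Polynomial ℝ) (hp : p ≠ 0) (hq : q ≠ 0)
    (K : Set ℂ) (hK : IsCompact K)
    (Z : Set ℂ) (hZ : Z = {z : ℂ | p.eval z.re = 0 ∧ q.eval z.im = 0})
    (C₀ : ℝ)
    (hdom : ∀ z ∈ K, max |p.eval z.re| |q.eval z.im| ≤ C₀ * |p.eval z.re + q.eval z.im|)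
    (φ : ℂ → ℂ) (Cφ : ℝ) (hφbdd : ∀ z ∈ K \ Z, ‖φ z‖ ≤ Cφ)
    (hφmeas : Measurable ((K \ Z).restrict φ))
    (c : ℂ → ℕ → ℕ → ℂ)
    (hc : ∀ w ∈ K ∩ Z, ∃ Cw > (0 : ℝ), ∃ δw > (0 : ℝ), ∀ z ∈ K \ Z, z ≠ w →
      ‖z - w‖ < δw →
      ‖φ z - ∑ k ∈ Finset.range (Polynomial.rootMultiplicity w.re p),
          ∑ l ∈ Finset.range (Polynomial.rootMultiplicity w.im q),
          c w k l * ((z - w).re : ℂ) ^ k * ((z - w).im : ℂ) ^ l‖ ≤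
        Cw * max (|(z - w).re| ^ Polynomial.rootMultiplicity w.re p)
                 (|(z - w).im| ^ Polynomial.rootMultiplicity w.im q)) :
    ∃ (s : MvPolynomial (Fin 2) ℂ) (g : ℂ → ℂ),
      (∀ w ∈ K ∩ Z, ∀ k < Polynomial.rootMultiplicity w.re p,
        ∀ l < Polynomial.rootMultiplicity w.im q,
        (((k.factorial * l.factorial : ℕ) : ℂ))⁻¹ *
          MvPolynomial.eval ![(w.re : ℂ), (w.im : ℂ)]
            ((fun t => MvPolynomial.pderiv (0 : Fin 2) t)^[k]
              ((fun t => MvPolynomial.pderiv (1 : Fin 2) t)^[l] s)) = c w k l) ∧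
      (∃ Cg : ℝ, ∀ z ∈ K \ Z, ‖g z‖ ≤ Cg) ∧
      Measurable ((K \ Z).restrict g) ∧
      (∀ z ∈ K \ Z,
        φ z = MvPolynomial.eval ![(z.re : ℂ), (z.im : ℂ)] s +
          ((p.eval z.re + q.eval z.im : ℝ) : ℂ) * g z) := by
  have hD : ∀ z ∈ K \ Z, p.eval z.re + q.eval z.im ≠ 0 := by
    rintro z ⟨hzK, hzZ⟩ h0
    have h := hdom z hzK
    rw [h0, abs_zero, mul_zero, max_le_iff, abs_nonpos_iff, abs_nonpos_iff] at h
    exact hzZ (hZ ▸ h)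
  have hfin : (K ∩ Z).Finite :=
    (hZ ▸ Complex.finite_setOf_eval_re_eq_zero_and_eval_im_eq_zero hp hq).subset
      Set.inter_subset_right
  have := hfin.to_subtype
  obtain ⟨s, hs⟩ := exists_sub_mem_span_X_sub_C_pow (fun w : ↥(K ∩ Z) => Complex.reIm w)
    (Complex.injective_reIm_pair.comp Subtype.val_injective)
    (fun w => p.rootMultiplicity (w : ℂ).re) (fun w => q.rootMultiplicity (w : ℂ).im)
    (fun w => jetPoly (Complex.reIm w) 0 1 (p.rootMultiplicity (w : ℂ).re)
      (q.rootMultiplicity (w : ℂ).im) (c w))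
  have hO : ∀ z ∈ K, (fun z => φ z - eval (Complex.reIm z) s) =O[𝓝[K \ Z] z]
      fun z => p.eval z.re + q.eval z.im := by
    intro z hzK
    by_cases hzZ : z ∈ Z
    · exact Complex.isBigO_sub_eval_of_jet hp hq Set.sdiff_subset hdom (fun h => h.2 hzZ)
        (hc z ⟨hzK, hzZ⟩) (hs ⟨z, hzK, hzZ⟩)
    · exact Complex.isBigO_sub_eval_of_ne_zero hφbdd s (hD z ⟨hzK, hzZ⟩)
  obtain ⟨C, hC⟩ := hK.exists_bound_of_isBigO_nhdsWithin hO
  refine ⟨s, fun z => (φ z - eval (Complex.reIm z) s) / (p.eval z.re + q.eval z.im : ℝ),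
    fun w hw k hk l hl => ?_, ⟨C, fun z hz => ?_⟩, ?_, fun z hz => ?_⟩
  · have h := evalMixedPDeriv_eq_of_sub_mem_span (by decide) _ hk hl _ (hs ⟨w, hw⟩)
    rw [evalMixedPDeriv_apply, Complex.reIm] at h
    rw [h, ← Nat.cast_mul, inv_mul_cancel_left₀ (Nat.cast_ne_zero.2 (by positivity))]
  · rw [norm_div, Complex.norm_real, div_le_iff₀ (norm_pos_iff.2 (hD z hz))]
    exact hC z ⟨hz.1, hz⟩
  · have hD' : Continuous fun z : ℂ => ((p.eval z.re + q.eval z.im : ℝ) : ℂ) := by fun_prop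
    exact (hφmeas.sub ((s.continuous_eval.comp Complex.continuous_reIm).measurable.comp
      measurable_subtype_coe)).div (hD'.measurable.comp measurable_subtype_coe)
  · rw [mul_div_cancel₀ _ (Complex.ofReal_ne_zero.2 (hD z hz))]
    exact (add_sub_cancel _ _).symm

/-- Decomposition `φ = s + (p(Re·)+q(Im·))·g` of a function `φ` on `K \ Z`
(`K ⊆ ℂ` compact, `Z` the joint zero set of `p(Re·)` and `q(Im·)`): if
`max(|p(Re z)|,|q(Im z)|) ≤ C₀|p(Re z)+q(Im z)|` on `K`, `φ` is bounded and Borel measurable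
on `K \ Z` and has the regular growth behaviour with jet coefficients `c^w_{k,l}` at each
`w ∈ K ∩ Z`, then there are a two-variable polynomial `s` interpolating the jets and a
bounded Borel measurable `g` on `K \ Z` with
`φ(z) = s(Re z, Im z) + (p(Re z)+q(Im z))·g(z)` on `K \ Z`. -/
theorem stmt_13 (p q : Polynomial ℝ) (hp : p ≠ 0) (hq : q ≠ 0)
    (K : Set ℂ) (hK : IsCompact K)
    (Z : Set ℂ) (hZ : Z = {z : ℂ | p.eval z.re = 0 ∧ q.eval z.im = 0})
    (C₀ : ℝ) (hC₀ : 0 < C₀)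
    (hdom : ∀ z ∈ K, max |p.eval z.re| |q.eval z.im| ≤ C₀ * |p.eval z.re + q.eval z.im|)
    (φ : ℂ → ℂ) (Cφ : ℝ) (hφbdd : ∀ z ∈ K \ Z, ‖φ z‖ ≤ Cφ)
    (hφmeas : Measurable ((K \ Z).restrict φ))
    (c : ℂ → ℕ → ℕ → ℂ)
    (hc : ∀ w ∈ K ∩ Z, ∃ Cw > (0 : ℝ), ∃ δw > (0 : ℝ), ∀ z ∈ K \ Z, z ≠ w →
      ‖z - w‖ < δw →
      ‖φ z - ∑ k ∈ Finset.range (Polynomial.rootMultiplicity w.re p),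
          ∑ l ∈ Finset.range (Polynomial.rootMultiplicity w.im q),
          c w k l * ((z - w).re : ℂ) ^ k * ((z - w).im : ℂ) ^ l‖ ≤
        Cw * max (|(z - w).re| ^ Polynomial.rootMultiplicity w.re p)
                 (|(z - w).im| ^ Polynomial.rootMultiplicity w.im q)) :
    ∃ (s : MvPolynomial (Fin 2) ℂ) (g : ℂ → ℂ),
      (∀ w ∈ K ∩ Z, ∀ k < Polynomial.rootMultiplicity w.re p,
        ∀ l < Polynomial.rootMultiplicity w.im q,
        (((k.factorial * l.factorial : ℕ) : ℂ))⁻¹ *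
          MvPolynomial.eval ![(w.re : ℂ), (w.im : ℂ)]
            ((fun t => MvPolynomial.pderiv (0 : Fin 2) t)^[k]
              ((fun t => MvPolynomial.pderiv (1 : Fin 2) t)^[l] s)) = c w k l) ∧
      (∃ Cg : ℝ, ∀ z ∈ K \ Z, ‖g z‖ ≤ Cg) ∧
      Measurable ((K \ Z).restrict g) ∧
      (∀ z ∈ K \ Z,
        φ z = MvPolynomial.eval ![(z.re : ℂ), (z.im : ℂ)] s +
          ((p.eval z.re + q.eval z.im : ℝ) : ℂ) * g z) :=
  stmt_13_general p q hp hq K hK Z hZ C₀ hdom φ Cφ hφbdd hφmeas c hc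
end
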